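/- arXiv:1507.01703 — 7 statements merged into one kernel-verified Lean document; each statement's English description precedes it below -/
import Mathlib

section
/- The infinite sum of 1/(i * binom(2i, i)) for i from 1 to infinity equals π/(3√3). -/
/-!
Since `1 / (n * C(2n, n)) = (n-1)! n! / (2n)!` is the Beta integral `∫₀¹ t^(n-1) (1-t)^n dt`,
the series is `∫₀¹ ∑ t^(n-1) (1-t)^n dt`; the integrand is a geometric series in
`t(1-t) ≤ 1/4`, so the sum may be taken inside and equals `(1-t)/(1-t+t²)`, whose integral
over `[0, 1]` is `π/(3√3)` by the antiderivative `-½ log(1-t+t²) + arctan((2t-1)/√3)/√3`.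
-/

open Real

open intervalIntegral in
theorem integral_pow_mul_one_sub_pow_succ (m n : ℕ) :
    (m + 1 : ℝ) * ∫ t in (0:ℝ)..1, t ^ m * (1 - t) ^ (n + 1)
      = (n + 1) * ∫ t in (0:ℝ)..1, t ^ (m + 1) * (1 - t) ^ n := by
  have hu : ∀ x ∈ Set.uIcc (0:ℝ) 1,
      HasDerivAt (fun t : ℝ => (1 - t) ^ (n + 1)) (-((n + 1) * (1 - x) ^ n)) x := fun x _ => by
    simpa using ((hasDerivAt_id x).const_sub 1).fun_pow (n + 1)
  have hv : ∀ x ∈ Set.uIcc (0:ℝ) 1,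
      HasDerivAt (fun t : ℝ => t ^ (m + 1)) ((m + 1) * x ^ m) x := fun x _ => by
    simpa using hasDerivAt_pow (m + 1) x
  have hparts := integral_mul_deriv_eq_deriv_mul hu hv
    (Continuous.intervalIntegrable (by fun_prop) _ _)
    (Continuous.intervalIntegrable (by fun_prop) _ _)
  simp only [sub_self, zero_pow (Nat.succ_ne_zero _), mul_zero, one_pow, sub_zero, mul_one,
    neg_mul, integral_neg, zero_sub, neg_neg] at hparts
  rw [← integral_const_mul, ← integral_const_mul]
  convert hparts using 2 <;> ext t <;> ring

open scoped Nat in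
theorem integral_pow_mul_one_sub_pow (m n : ℕ) :
    ∫ t in (0:ℝ)..1, t ^ m * (1 - t) ^ n = m ! * n ! / (m + n + 1)! := by
  induction n generalizing m with
  | zero =>
    simp only [pow_zero, mul_one, integral_pow, one_pow, zero_pow (Nat.succ_ne_zero _), sub_zero,
      add_zero, Nat.factorial_zero]
    push_cast [Nat.factorial_succ]
    field_simp
  | succ n ih =>
    have h := integral_pow_mul_one_sub_pow_succ m n
    rw [ih (m + 1), show m + 1 + n + 1 = m + (n + 1) + 1 by ring] at h
    have hm : (m + 1 : ℝ) ≠ 0 := by positivity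
    rw [← mul_right_inj' hm, h]
    push_cast [Nat.factorial_succ]
    field_simp

theorem one_div_succ_mul_choose_eq_integral (n : ℕ) :
    1 / ((n + 1 : ℝ) * (2 * (n + 1)).choose (n + 1))
      = ∫ t in (0:ℝ)..1, t ^ n * (1 - t) ^ (n + 1) := by
  rw [integral_pow_mul_one_sub_pow, Nat.cast_choose ℝ (by omega),
    show 2 * (n + 1) - (n + 1) = n + 1 by omega, show n + (n + 1) + 1 = 2 * (n + 1) by omega]
  push_cast [Nat.factorial_succ]
  field_simp

theorem mul_one_sub_le_quarter (t : ℝ) : t * (1 - t) ≤ 1 / 4 := by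
  nlinarith [sq_nonneg (2 * t - 1)]

theorem hasSum_pow_mul_one_sub_pow {t : ℝ} (ht : |t * (1 - t)| < 1) :
    HasSum (fun n : ℕ => t ^ n * (1 - t) ^ (n + 1)) ((1 - t) / (1 - t * (1 - t))) := by
  have e : (fun n : ℕ => t ^ n * (1 - t) ^ (n + 1)) = fun n => (1 - t) * (t * (1 - t)) ^ n := by
    funext n
    rw [mul_pow]
    ring
  rw [e, div_eq_mul_inv]
  exact (hasSum_geometric_of_abs_lt_one ht).mul_left (1 - t)

open intervalIntegral in
theorem integral_one_sub_div_one_sub_mul_one_sub :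
    ∫ t in (0:ℝ)..1, (1 - t) / (1 - t * (1 - t)) = π / (3 * √3) := by
  have hq : ∀ t : ℝ, 0 < 1 - t * (1 - t) := fun t => by linarith [mul_one_sub_le_quarter t]
  have hs : √3 ^ 2 = 3 := Real.sq_sqrt (by norm_num)
  -- `1 - t(1-t) = ((2t-1)² + 3)/4`, whence the `log` + `arctan` antiderivative.
  have hderiv : ∀ x ∈ Set.uIcc (0:ℝ) 1, HasDerivAt
      (fun t => -(1 / 2) * Real.log (1 - t * (1 - t)) + arctan ((2 * t - 1) / √3) / √3)
      ((1 - x) / (1 - x * (1 - x))) x := by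
    intro x _
    have hp : HasDerivAt (fun t : ℝ => 1 - t * (1 - t)) (2 * x - 1) x :=
      (((hasDerivAt_id' x).mul ((hasDerivAt_id' x).const_sub 1)).const_sub 1).congr_deriv
        (by ring)
    have hl : HasDerivAt (fun t : ℝ => (2 * t - 1) / √3) (2 / √3) x := by
      simpa using (((hasDerivAt_id x).const_mul 2).sub_const 1).div_const √3
    refine (((hp.log (hq x).ne').const_mul (-(1 / 2))).add
      (hl.arctan.div_const √3)).congr_deriv ?_
    have h4 : 1 + ((2 * x - 1) / √3) ^ 2 = 4 * (1 - x * (1 - x)) / 3 := by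
      rw [div_pow, hs]
      ring
    have hqx := (hq x).ne'
    rw [h4]
    field_simp
    rw [hs]
    ring
  rw [integral_eq_sub_of_hasDerivAt hderiv (Continuous.intervalIntegrable
    (Continuous.div (by fun_prop) (by fun_prop) fun t => (hq t).ne') _ _)]
  norm_num
  rw [neg_div, arctan_neg, one_div, arctan_inv_sqrt_three]
  ring

theorem abs_pow_mul_one_sub_pow_le {t : ℝ} (h0 : 0 ≤ t) (h1 : t ≤ 1) (n : ℕ) :
    |t ^ n * (1 - t) ^ (n + 1)| ≤ (1 / 4) ^ n := by
  have h1' : 0 ≤ 1 - t := by linarith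
  rw [abs_of_nonneg (by positivity)]
  calc t ^ n * (1 - t) ^ (n + 1) = (t * (1 - t)) ^ n * (1 - t) := by rw [mul_pow]; ring
    _ ≤ (1 / 4) ^ n * 1 := by
      gcongr
      · exact mul_one_sub_le_quarter t
      · linarith
    _ = (1 / 4) ^ n := mul_one _

open intervalIntegral in
theorem hasSum_integral_pow_mul_one_sub_pow :
    HasSum (fun n : ℕ => ∫ t in (0:ℝ)..1, t ^ n * (1 - t) ^ (n + 1))
      (∫ t in (0:ℝ)..1, (1 - t) / (1 - t * (1 - t))) := by
  refine hasSum_integral_of_dominated_convergence (fun n _ => (1 / 4 : ℝ) ^ n)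
    (fun n => (Continuous.aestronglyMeasurable (by fun_prop)))
    (fun n => .of_forall fun t ht => ?_)
    (.of_forall fun _ _ => summable_geometric_of_lt_one (by norm_num) (by norm_num))
    intervalIntegrable_const (.of_forall fun t ht => hasSum_pow_mul_one_sub_pow ?_)
  all_goals rw [Set.uIoc_of_le zero_le_one] at ht
  · exact abs_pow_mul_one_sub_pow_le ht.1.le ht.2 n
  · rw [abs_lt]
    constructor
    · linarith [mul_nonneg ht.1.le (sub_nonneg.2 ht.2)]
    · linarith [mul_one_sub_le_quarter t]

theorem stmt_0 : (∑' i : ℕ, (1:ℝ) / (((i:ℝ)+1) * ((Nat.choose (2*(i+1)) (i+1)) : ℝ))) = Real.pi / (3 * Real.sqrt 3) := by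
  rw [tsum_congr one_div_succ_mul_choose_eq_integral,
    hasSum_integral_pow_mul_one_sub_pow.tsum_eq, integral_one_sub_div_one_sub_mul_one_sub]
end

section
/- The infinite sum of binom(2i, i)/(16^i * i) for i from 1 to infinity equals 4·log(2) − 2·log(2 + √3). -/
/-!
Expanding `(1 - 4x)^(-1/2)` as a binomial series gives `∑ C(2n, n) xⁿ = 1 / √(1 - 4x)` for
`|x| < 1/4`. Hence `F(x) = ∑_{n ≥ 1} C(2n, n) xⁿ / n` has derivative
`(1 / √(1 - 4x) - 1) / x = 4 / (√(1 - 4x) (1 + √(1 - 4x)))`, which is also the derivative of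
`2 log (2 / (1 + √(1 - 4x)))`; both vanish at `0`, so they agree, and `x = 1/16` gives the claim.
-/

open Real

namespace Ring

open Polynomial in
theorem succ_mul_multichoose_succ {R : Type*} [Field R] [CharZero R] (r : R) (n : ℕ) :
    (n + 1 : R) * multichoose r (n + 1) = multichoose r n * (r + n) := by
  have hn := factorial_nsmul_multichoose_eq_ascPochhammer r n
  have hn1 := factorial_nsmul_multichoose_eq_ascPochhammer r (n + 1)
  rw [ascPochhammer_smeval_eq_eval, nsmul_eq_mul] at hn hn1
  rw [ascPochhammer_succ_eval, ← hn, Nat.factorial_succ] at hn1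
  push_cast at hn1
  apply mul_left_cancel₀ (Nat.cast_ne_zero.mpr n.factorial_ne_zero : (n.factorial : R) ≠ 0)
  linear_combination hn1

theorem multichoose_half_eq_centralBinom_div (n : ℕ) :
    multichoose (1 / 2 : ℝ) n = n.centralBinom / 4 ^ n := by
  induction n with
  | zero => simp
  | succ n ih =>
    have hc : ((n + 1 : ℕ) : ℝ) * (n + 1).centralBinom = 2 * (2 * n + 1) * n.centralBinom := by
      exact_mod_cast Nat.succ_mul_centralBinom_succ n
    apply mul_left_cancel₀ (by positivity : (n + 1 : ℝ) ≠ 0)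
    rw [succ_mul_multichoose_succ, ih, mul_div_assoc', ← Nat.cast_succ, hc]
    field_simp
    ring

end Ring

theorem hasSum_centralBinom_mul_pow {x : ℝ} (hx : |x| < 1 / 4) :
    HasSum (fun n => (n.centralBinom : ℝ) * x ^ n) (1 / √(1 - 4 * x)) := by
  have h4x : ‖4 * x‖ₑ < 1 := by
    rw [Real.enorm_eq_ofReal_abs, ENNReal.ofReal_lt_one, abs_mul]; norm_num; linarith
  have h := (one_div_one_sub_rpow_hasFPowerSeriesOnBall_zero (1 / 2)).hasSum
    (Metric.mem_eball.mpr (by rwa [edist_zero_right]))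
  simp only [FormalMultilinearSeries.ofScalars_apply_eq, ← Ring.multichoose_eq,
    Ring.multichoose_half_eq_centralBinom_div, smul_eq_mul, zero_add, ← sqrt_eq_rpow] at h
  refine h.congr_fun fun n => ?_
  rw [mul_pow]
  field_simp

theorem hasSum_centralBinom_succ_mul_pow {x : ℝ} (hx : |x| < 1 / 4) :
    HasSum (fun n => ((n + 1).centralBinom : ℝ) * x ^ n)
      (4 / (√(1 - 4 * x) * (1 + √(1 - 4 * x)))) := by
  rcases eq_or_ne x 0 with rfl | hx0
  · convert hasSum_single (f := fun n => ((n + 1).centralBinom : ℝ) * 0 ^ n) 0 fun n hn => by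
      simp [hn]
    norm_num [Nat.centralBinom, Nat.choose]
  have hpos : 0 < 1 - 4 * x := by linarith [le_abs_self x]
  have hsq := sq_sqrt hpos.le
  have h := ((hasSum_nat_add_iff' 1).mpr (hasSum_centralBinom_mul_pow hx)).div_const x
  simp only [Finset.range_one, Finset.sum_singleton, pow_zero, Nat.centralBinom_zero,
    Nat.cast_one, mul_one] at h
  rw [show 4 / (√(1 - 4 * x) * (1 + √(1 - 4 * x))) = (1 / √(1 - 4 * x) - 1) / x by
    field_simp; linear_combination hsq]
  exact h.congr_fun fun n => by field_simp; ring

theorem hasDerivAt_tsum_centralBinom_succ_mul_pow_div {x : ℝ} (hx : |x| < 1 / 4) :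
    HasDerivAt (fun y => ∑' n : ℕ, ((n + 1).centralBinom : ℝ) * y ^ (n + 1) / (n + 1))
      (4 / (√(1 - 4 * x) * (1 + √(1 - 4 * x)))) x := by
  obtain ⟨r, hxr, hr⟩ := exists_between hx
  have hr0 : 0 < r := (abs_nonneg x).trans_lt hxr
  rw [← (hasSum_centralBinom_succ_mul_pow hx).tsum_eq]
  refine hasDerivAt_tsum_of_isPreconnected (u := fun n => 4 * (4 * r) ^ n)
    (g := fun n y => ((n + 1 : ℕ).centralBinom : ℝ) * y ^ (n + 1) / (n + 1))
    (g' := fun n y => ((n + 1 : ℕ).centralBinom : ℝ) * y ^ n)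
    ((summable_geometric_of_lt_one (by linarith) (by linarith)).mul_left 4) isOpen_Ioo
    isPreconnected_Ioo (fun n y _ => ?_) (fun n y hy => ?_) (y₀ := 0) ⟨by linarith, hr0⟩ ?_
    (abs_lt.mp hxr)
  · refine (((hasDerivAt_pow (n + 1) y).const_mul _).div_const ((n : ℝ) + 1)).congr_deriv ?_
    simp [field]
  · have hc : ((n + 1).centralBinom : ℝ) ≤ 4 ^ (n + 1) := by
      exact_mod_cast Nat.centralBinom_le_four_pow _
    calc ‖((n + 1).centralBinom : ℝ) * y ^ n‖ = (n + 1).centralBinom * |y| ^ n := by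
          rw [norm_mul, norm_pow, Real.norm_natCast, Real.norm_eq_abs]
      _ ≤ 4 ^ (n + 1) * r ^ n := by gcongr; exact abs_lt.mpr hy |>.le
      _ = 4 * (4 * r) ^ n := by ring
  · simp

theorem hasDerivAt_two_mul_log_two_div_one_add_sqrt {x : ℝ} (hx : x < 1 / 4) :
    HasDerivAt (fun y => 2 * log (2 / (1 + √(1 - 4 * y))))
      (4 / (√(1 - 4 * x) * (1 + √(1 - 4 * x)))) x := by
  have hpos : 0 < 1 - 4 * x := by linarith
  have hsqrt : HasDerivAt (fun y => √(1 - 4 * y)) (-4 / (2 * √(1 - 4 * x))) x :=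
    (((hasDerivAt_id x).const_mul 4).const_sub 1).sqrt hpos.ne' |>.congr_deriv (by simp)
  refine ((((hasDerivAt_const x (2 : ℝ)).fun_div (hsqrt.const_add 1) (by positivity)).log
    (by positivity)).const_mul 2).congr_deriv ?_
  field_simp
  ring

theorem tsum_centralBinom_succ_mul_pow_div {x : ℝ} (hx : |x| < 1 / 4) :
    ∑' n : ℕ, ((n + 1).centralBinom : ℝ) * x ^ (n + 1) / (n + 1) =
      2 * log (2 / (1 + √(1 - 4 * x))) := by
  have hF (y) (hy : y ∈ Set.Ioo (-(1 / 4) : ℝ) (1 / 4)) :=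
    hasDerivAt_tsum_centralBinom_succ_mul_pow_div (abs_lt.mpr hy)
  have hL (y) (hy : y ∈ Set.Ioo (-(1 / 4) : ℝ) (1 / 4)) :=
    hasDerivAt_two_mul_log_two_div_one_add_sqrt hy.2
  refine isOpen_Ioo.eqOn_of_deriv_eq isPreconnected_Ioo
    (fun y hy => (hF y hy).differentiableAt.differentiableWithinAt)
    (fun y hy => (hL y hy).differentiableAt.differentiableWithinAt)
    (fun y hy => by rw [(hF y hy).deriv, (hL y hy).deriv]) (x := 0) (by norm_num) ?_
    (abs_lt.mp hx)
  norm_num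

theorem stmt_4 : (∑' i : ℕ, ((Nat.choose (2*(i+1)) (i+1)) : ℝ) / ((16:ℝ)^(i+1) * ((i:ℝ)+1))) = 4 * Real.log 2 - 2 * Real.log (2 + Real.sqrt 3) := by
  have h := tsum_centralBinom_succ_mul_pow_div (x := 1 / 16) (by norm_num [abs_of_pos])
  have hsqrt : √(1 - 4 * (1 / 16) : ℝ) = √3 / 2 := by
    rw [show (1 - 4 * (1 / 16) : ℝ) = 3 / 2 ^ 2 by norm_num, sqrt_div' _ (by norm_num),
      sqrt_sq zero_le_two]
  have hlog : 2 / (1 + √3 / 2) = 2 ^ 2 / (2 + √3) := by field_simp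
  rw [hsqrt, hlog, log_div (by positivity) (by positivity), log_pow] at h
  convert h using 1
  · congr 1 with i
    rw [Nat.centralBinom_eq_two_mul_choose, one_div_pow]
    field_simp
  · push_cast; ring
end

section
/- The infinite sum of binom(2i, i)/(16^i · (2i+1)) for i from 1 to infinity equals π/3 − 1. -/
/-!
The binomial series gives `1 / √(1 - x) = ∑ C(2n, n) xⁿ / 4ⁿ` for `|x| < 1`. Substituting `t²`
for `x` and integrating termwise over `[0, x]` (dominated convergence) yields the Maclaurin series
`arcsin x = ∑ C(2n, n) x^(2n+1) / (4ⁿ (2n + 1))`; at `x = 1/2` this reads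
`∑ C(2n, n) / (16ⁿ (2n + 1)) = 2 arcsin (1/2) = π / 3`, and the term `n = 0` is `1`.
-/

open Real Finset Polynomial

namespace Ring

variable {K : Type*} [Field K] [CharZero K]

theorem multichoose_succ_mul (r : K) (n : ℕ) :
    multichoose r (n + 1) * (n + 1) = multichoose r n * (r + n) := by
  have hpoch := factorial_nsmul_multichoose_eq_ascPochhammer r
  have hsucc := hpoch (n + 1)
  rw [ascPochhammer_smeval_eq_eval, ascPochhammer_succ_eval, ← ascPochhammer_smeval_eq_eval,
    ← hpoch n, Nat.factorial_succ] at hsucc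
  simp only [nsmul_eq_mul, Nat.cast_mul, Nat.cast_succ] at hsucc
  apply mul_left_cancel₀ (Nat.cast_ne_zero.mpr n.factorial_ne_zero : (n.factorial : K) ≠ 0)
  linear_combination hsucc

theorem multichoose_one_half (n : ℕ) :
    multichoose (1 / 2 : K) n = n.centralBinom / 4 ^ n := by
  induction n with
  | zero => simp
  | succ n ih =>
    have hrec := multichoose_succ_mul (1 / 2 : K) n
    have hc : ((n : K) + 1) * (n + 1).centralBinom = 2 * (2 * n + 1) * n.centralBinom := by
      exact_mod_cast Nat.succ_mul_centralBinom_succ n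
    rw [ih] at hrec
    apply mul_right_cancel₀ (Nat.cast_add_one_ne_zero n)
    rw [hrec, pow_succ]
    field_simp
    linear_combination -2 * hc

end Ring

theorem hasSum_centralBinom_div_four_pow_mul_pow {x : ℝ} (hx : |x| < 1) :
    HasSum (fun n ↦ (n.centralBinom : ℝ) / 4 ^ n * x ^ n) (1 / √(1 - x)) := by
  have h := (one_div_one_sub_rpow_hasFPowerSeriesOnBall_zero (1 / 2)).hasSum
    (y := x) (by simpa [Real.enorm_eq_ofReal_abs] using hx)
  simp only [FormalMultilinearSeries.ofScalars_apply_eq, zero_add, smul_eq_mul,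
    ← Ring.multichoose_eq, Ring.multichoose_one_half, ← sqrt_eq_rpow] at h
  exact h

theorem abs_le_abs_of_mem_uIcc_zero {t x : ℝ} (ht : t ∈ Set.uIcc 0 x) : |t| ≤ |x| := by
  simpa using Set.abs_sub_left_of_mem_uIcc ht

theorem integral_one_div_sqrt_one_sub_sq {x : ℝ} (hx : |x| < 1) :
    ∫ t in (0 : ℝ)..x, 1 / √(1 - t ^ 2) = arcsin x := by
  have hpos : ∀ t ∈ Set.uIcc 0 x, 0 < 1 - t ^ 2 := fun t ht ↦ by
    have := abs_le_abs_of_mem_uIcc_zero ht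
    nlinarith [abs_nonneg t, sq_abs t]
  rw [intervalIntegral.integral_eq_sub_of_hasDerivAt (f := arcsin), arcsin_zero, sub_zero]
  · intro t ht
    have := hpos t ht
    exact hasDerivAt_arcsin (by nlinarith) (by nlinarith)
  · exact (continuousOn_const.div (by fun_prop) fun t ht ↦
      (sqrt_pos.mpr (hpos t ht)).ne').intervalIntegrable

theorem Real.hasSum_arcsin {x : ℝ} (hx : |x| < 1) :
    HasSum (fun n : ℕ ↦ (n.centralBinom : ℝ) / 4 ^ n * (x ^ (2 * n + 1) / (2 * n + 1)))
      (arcsin x) := by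
  have hsq {t : ℝ} (ht : |t| ≤ |x|) : |t ^ 2| < 1 := by
    rw [abs_pow]; nlinarith [abs_nonneg t]
  have hterm (n : ℕ) : ∫ t in (0 : ℝ)..x, (n.centralBinom : ℝ) / 4 ^ n * (t ^ 2) ^ n =
      (n.centralBinom : ℝ) / 4 ^ n * (x ^ (2 * n + 1) / (2 * n + 1)) := by
    simp_rw [← pow_mul]
    rw [intervalIntegral.integral_const_mul, integral_pow]
    push_cast
    simp
  simp_rw [← hterm, ← integral_one_div_sqrt_one_sub_sq hx]
  refine intervalIntegral.hasSum_integral_of_dominated_convergence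
    (fun (n : ℕ) _ ↦ (n.centralBinom : ℝ) / 4 ^ n * (x ^ 2) ^ n) (fun n ↦ by fun_prop) ?_ ?_
    intervalIntegrable_const ?_
  · refine fun n ↦ .of_forall fun t ht ↦ ?_
    have ht' := abs_le_abs_of_mem_uIcc_zero (Set.uIoc_subset_uIcc ht)
    rw [norm_mul, norm_of_nonneg (by positivity), norm_pow, norm_pow, norm_eq_abs, ← sq_abs x]
    gcongr
  · exact .of_forall fun _ _ ↦ (hasSum_centralBinom_div_four_pow_mul_pow (hsq le_rfl)).summable
  · refine .of_forall fun t ht ↦ ?_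
    have ht' := abs_le_abs_of_mem_uIcc_zero (Set.uIoc_subset_uIcc ht)
    simpa using hasSum_centralBinom_div_four_pow_mul_pow (hsq ht')

theorem Real.arcsin_one_half : arcsin (1 / 2) = π / 6 := by
  rw [← sin_pi_div_six, arcsin_sin] <;> linarith [pi_pos]

theorem hasSum_centralBinom_div_sixteen_pow :
    HasSum (fun n : ℕ ↦ (n.centralBinom : ℝ) / (16 ^ n * (2 * n + 1))) (π / 3) := by
  have h := (hasSum_arcsin (x := 1 / 2) (by norm_num [abs_of_pos])).mul_left 2
  rw [arcsin_one_half, show 2 * (π / 6) = π / 3 by ring] at h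
  refine h.congr_fun fun n ↦ ?_
  rw [pow_succ, pow_mul, show (16 : ℝ) = 4 * 4 by norm_num, mul_pow]
  field_simp
  rw [mul_assoc, ← mul_pow]
  norm_num

theorem stmt_5 : (∑' i : ℕ, ((Nat.choose (2*(i+1)) (i+1)) : ℝ) / ((16:ℝ)^(i+1) * (2*((i:ℝ)+1)+1))) = Real.pi / 3 - 1 := by
  have h := (hasSum_nat_add_iff' 1).mpr hasSum_centralBinom_div_sixteen_pow
  simp only [Nat.centralBinom_eq_two_mul_choose, Nat.cast_add, Nat.cast_one, range_one,
    sum_singleton] at h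
  convert h.tsum_eq using 1
  norm_num
end

section
/- The infinite sum of 3^i/(i^2 · binom(2i, i)) for i from 1 to infinity equals 2π²/9. -/
/-!
With `T_n(t) = (4 sin² t)^(n+1) / ((n+1)² C(2n+2, n+1))` and `D_n(t) = (4 sin² t)^n / C(2n, n)`
(`arcsinSqTerm (4 * sin t ^ 2) n` and `sinSqKernel n t` below), the recursion
`(n+1) C(2n+2, n+1) = 2(2n+1) C(2n, n)` and `cos² = 1 - sin²` give `T_n'' = 4 (D_n - D_{n+1})`,
while `T_n(0) = T_n'(0) = 0`. Taylor's formula with integral remainder and telescoping give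
`∑_{n<N} T_n(θ) = 2θ² - 4 ∫₀^θ (θ - t) D_N(t) dt`, since `D_0 = 1`. As `4^N ≤ (2N+1) C(2N, N)`,
the remainder is `O(N θ² sin^{2N} θ)`, which vanishes as `N → ∞` when `0 ≤ θ < π/2`.
At `θ = π/3` we have `4 sin² θ = 3`, and the sum is `2 (π/3)² = 2π²/9`.
-/

open Real Finset Filter Topology intervalIntegral

theorem eq_add_mul_add_integral_sub_mul_of_hasDerivAt {f f' f'' : ℝ → ℝ}
    (hf : ∀ t, HasDerivAt f (f' t) t) (hf' : ∀ t, HasDerivAt f' (f'' t) t)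
    (hf'' : Continuous f'') (a b : ℝ) :
    f b = f a + (b - a) * f' a + ∫ t in a..b, (b - t) * f'' t := by
  have hψ : ∀ t ∈ Set.uIcc a b,
      HasDerivAt (fun t => (b - t) * f' t + f t) ((b - t) * f'' t) t := by
    intro t _
    refine ((((hasDerivAt_id' t).const_sub b).fun_mul (hf' t)).fun_add (hf t)).congr_deriv ?_
    ring
  rw [integral_eq_sub_of_hasDerivAt hψ ((by fun_prop : Continuous _).intervalIntegrable a b)]
  ring

theorem hasDerivAt_sin_pow_succ_mul_cos (k : ℕ) (t : ℝ) :
    HasDerivAt (fun t => sin t ^ (k + 1) * cos t)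
      (((k : ℝ) + 1) * sin t ^ k - ((k : ℝ) + 2) * sin t ^ (k + 2)) t := by
  refine (((hasDerivAt_sin t).fun_pow (k + 1)).fun_mul (hasDerivAt_cos t)).congr_deriv ?_
  simp only [Nat.add_sub_cancel, Nat.cast_add, Nat.cast_one]
  linear_combination ((k : ℝ) + 1) * sin t ^ k * Real.sin_sq_add_cos_sq t

noncomputable def sinSqKernel (n : ℕ) (t : ℝ) : ℝ :=
  4 ^ n / n.centralBinom * sin t ^ (2 * n)

noncomputable def arcsinSqTerm (x : ℝ) (n : ℕ) : ℝ :=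
  x ^ (n + 1) / (((n : ℝ) + 1) ^ 2 * (n + 1).centralBinom)

lemma arcsinSqTerm_four_mul_sin_sq (n : ℕ) (t : ℝ) :
    arcsinSqTerm (4 * sin t ^ 2) n = arcsinSqTerm 4 n * sin t ^ (2 * n + 2) := by
  simp only [arcsinSqTerm, mul_pow, ← pow_mul]
  ring

lemma arcsinSqTerm_four_mul_succ_mul (n : ℕ) :
    arcsinSqTerm 4 n * ((2 * n + 2) * (2 * n + 1)) = 4 * (4 ^ n / n.centralBinom) := by
  have hrec : ((n : ℝ) + 1) * (n + 1).centralBinom = 2 * (2 * n + 1) * n.centralBinom := by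
    exact_mod_cast Nat.succ_mul_centralBinom_succ n
  have := Nat.centralBinom_ne_zero n
  have := Nat.centralBinom_ne_zero (n + 1)
  simp only [arcsinSqTerm]
  field_simp
  linear_combination (-4 ^ (n + 1) : ℝ) * hrec

lemma arcsinSqTerm_four_mul_sq (n : ℕ) :
    arcsinSqTerm 4 n * (2 * n + 2) ^ 2 = 4 * (4 ^ (n + 1) / (n + 1).centralBinom) := by
  have := Nat.centralBinom_ne_zero (n + 1)
  simp only [arcsinSqTerm]
  field_simp
  ring

lemma hasDerivAt_arcsinSqTerm_four_mul_sin_sq (n : ℕ) (t : ℝ) :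
    HasDerivAt (fun t => arcsinSqTerm (4 * sin t ^ 2) n)
      (arcsinSqTerm 4 n * (2 * n + 2) * (sin t ^ (2 * n + 1) * cos t)) t := by
  simp only [arcsinSqTerm_four_mul_sin_sq]
  refine (((hasDerivAt_sin t).fun_pow (2 * n + 2)).const_mul (arcsinSqTerm 4 n)).congr_deriv ?_
  rw [show 2 * n + 2 - 1 = 2 * n + 1 by omega]
  push_cast
  ring

lemma hasDerivAt_deriv_arcsinSqTerm_four_mul_sin_sq (n : ℕ) (t : ℝ) :
    HasDerivAt (fun t => arcsinSqTerm 4 n * (2 * n + 2) * (sin t ^ (2 * n + 1) * cos t))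
      (4 * (sinSqKernel n t - sinSqKernel (n + 1) t)) t := by
  refine ((hasDerivAt_sin_pow_succ_mul_cos (2 * n) t).const_mul _).congr_deriv ?_
  simp only [sinSqKernel]
  push_cast
  linear_combination sin t ^ (2 * n) * arcsinSqTerm_four_mul_succ_mul n
    - sin t ^ (2 * n + 2) * arcsinSqTerm_four_mul_sq n

lemma arcsinSqTerm_four_mul_sin_sq_eq_integral (n : ℕ) (θ : ℝ) :
    arcsinSqTerm (4 * sin θ ^ 2) n
      = 4 * ∫ t in (0 : ℝ)..θ, (θ - t) * (sinSqKernel n t - sinSqKernel (n + 1) t) := by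
  rw [eq_add_mul_add_integral_sub_mul_of_hasDerivAt (hasDerivAt_arcsinSqTerm_four_mul_sin_sq n)
    (hasDerivAt_deriv_arcsinSqTerm_four_mul_sin_sq n) (by unfold sinSqKernel; fun_prop) 0 θ]
  simp [arcsinSqTerm, ← integral_const_mul, mul_left_comm]

lemma sum_range_arcsinSqTerm_four_mul_sin_sq (θ : ℝ) (N : ℕ) :
    ∑ n ∈ range N, arcsinSqTerm (4 * sin θ ^ 2) n
      = 2 * θ ^ 2 - 4 * ∫ t in (0 : ℝ)..θ, (θ - t) * sinSqKernel N t := by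
  induction N with
  | zero =>
    have h := integral_comp_sub_left (fun x : ℝ => x) θ (a := 0) (b := θ)
    simp only [sub_self, sub_zero, integral_id] at h
    simp only [range_zero, sum_empty, sinSqKernel, pow_zero, Nat.centralBinom_zero, Nat.cast_one,
      div_one, mul_zero, mul_one, h]
    ring
  | succ N ih =>
    have hint (n : ℕ) :
        IntervalIntegrable (fun t => (θ - t) * sinSqKernel n t) MeasureTheory.volume 0 θ :=
      (by unfold sinSqKernel; fun_prop : Continuous _).intervalIntegrable 0 θ
    rw [sum_range_succ, ih, arcsinSqTerm_four_mul_sin_sq_eq_integral]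
    simp only [mul_sub]
    rw [integral_sub (hint N) (hint (N + 1))]
    ring

lemma sinSqKernel_nonneg (n : ℕ) (t : ℝ) : 0 ≤ sinSqKernel n t := by
  rw [sinSqKernel, pow_mul]
  positivity

lemma sinSqKernel_le (n : ℕ) (t : ℝ) : sinSqKernel n t ≤ (2 * n + 1) * (sin t ^ 2) ^ n := by
  have hC : (0 : ℝ) < n.centralBinom := by exact_mod_cast Nat.centralBinom_pos n
  have h4 : (4 : ℝ) ^ n / n.centralBinom ≤ 2 * n + 1 := by
    rw [div_le_iff₀ hC]
    exact_mod_cast Nat.four_pow_le_two_mul_add_one_mul_central_binom n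
  rw [sinSqKernel, pow_mul]
  gcongr

lemma tendsto_integral_sub_mul_sinSqKernel {θ : ℝ} (h0 : 0 ≤ θ) (hθ : θ < π / 2) :
    Tendsto (fun N => ∫ t in (0 : ℝ)..θ, (θ - t) * sinSqKernel N t) atTop (𝓝 0) := by
  have hsin {t : ℝ} (ht : t ∈ Set.Icc 0 θ) : 0 ≤ sin t ∧ sin t ≤ sin θ :=
    ⟨sin_nonneg_of_nonneg_of_le_pi ht.1 (by linarith [pi_pos, ht.2]),
      sin_le_sin_of_le_of_le_pi_div_two (by linarith [pi_pos, ht.1]) hθ.le ht.2⟩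
  have hq : sin θ ^ 2 < 1 := by
    have := sin_lt_sin_of_lt_of_le_pi_div_two (by linarith [pi_pos]) le_rfl hθ
    rw [sin_pi_div_two] at this
    exact pow_lt_one₀ (hsin ⟨h0, le_rfl⟩).1 this two_ne_zero
  have hbound (N : ℕ) : ‖∫ t in (0 : ℝ)..θ, (θ - t) * sinSqKernel N t‖
      ≤ θ * ((2 * N + 1) * (sin θ ^ 2) ^ N) * |θ - 0| := by
    refine norm_integral_le_of_norm_le_const fun t ht => ?_
    rw [Set.uIoc_of_le h0] at ht
    obtain ⟨hs0, hsθ⟩ := hsin (Set.Ioc_subset_Icc_self ht)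
    rw [norm_mul, Real.norm_of_nonneg (sub_nonneg.2 ht.2),
      Real.norm_of_nonneg (sinSqKernel_nonneg N t)]
    exact mul_le_mul (by linarith [ht.1]) ((sinSqKernel_le N t).trans (by gcongr))
      (sinSqKernel_nonneg N t) h0
  have hlim : Tendsto (fun N : ℕ => θ * ((2 * N + 1) * (sin θ ^ 2) ^ N) * |θ - 0|)
      atTop (𝓝 0) := by
    have := ((tendsto_self_mul_const_pow_of_lt_one (sq_nonneg _) hq).const_mul 2).add
      (tendsto_pow_atTop_nhds_zero_of_lt_one (sq_nonneg _) hq)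
    simpa [add_mul, mul_assoc] using (this.const_mul θ).mul_const |θ - 0|
  exact squeeze_zero_norm hbound hlim

theorem hasSum_arcsinSqTerm_four_mul_sin_sq {θ : ℝ} (h0 : 0 ≤ θ) (hθ : θ < π / 2) :
    HasSum (arcsinSqTerm (4 * sin θ ^ 2)) (2 * θ ^ 2) := by
  refine (hasSum_iff_tendsto_nat_of_nonneg (fun n => by unfold arcsinSqTerm; positivity) _).2 ?_
  simp only [sum_range_arcsinSqTerm_four_mul_sin_sq]
  simpa using ((tendsto_integral_sub_mul_sinSqKernel h0 hθ).const_mul 4).const_sub (2 * θ ^ 2)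

theorem stmt_8 : (∑' i : ℕ, (3:ℝ)^(i+1) / (((i:ℝ)+1)^2 * ((Nat.choose (2*(i+1)) (i+1)) : ℝ))) = 2 * Real.pi^2 / 9 := by
  have h3 : 4 * sin (π / 3) ^ 2 = 3 := by
    rw [sin_pi_div_three, div_pow, sq_sqrt (by norm_num)]
    norm_num
  have := hasSum_arcsinSqTerm_four_mul_sin_sq (θ := π / 3) (by positivity) (by linarith [pi_pos])
  rw [h3] at this
  exact this.tsum_eq.trans (by ring)
end

section
/- The infinite sum over i ≥ 1 of 3^i · (∑_{j=1}^i 1/j²)/((2i+1) · binom(2i, i)) equals 8π³/(81√3). -/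
/-!
For `n ≥ 1` put `aₙ = 4ⁿ / (n² C(2n,n))` and `bₙ = 4ⁿ H⁽²⁾ₙ / ((2n+1) C(2n,n))`. Both are
polynomially bounded, so `f x = ∑ aₙ x²ⁿ` and `g x = ∑ bₙ x²ⁿ⁺¹` converge on `(-1, 1)` and can be
differentiated termwise. The recurrence `(n+1) C(2n+2,n+1) = 2(2n+1) C(2n,n)` turns into the
differential equations `(1 - x²) f'' - x f' = 4` and `(1 - x²) g' - x g = f`, which are also
satisfied by `2 arcsin² x` and `(2/3) arcsin³ x / √(1 - x²)`. As
`(1 - x²) F' - x F = √(1 - x²) (√(1 - x²) F)'`, solutions agreeing at `0` agree on `(-1, 1)`.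
At `x = √3/2`, where `x² = 3/4` and `arcsin x = π/3`, `g x` is `√3/2` times the sum in question
and equals `4π³/81`.
-/

open Real Finset Filter Asymptotics Set

namespace CentralBinomArcsin

section TwoStepSeries

variable {c d : ℕ → ℝ} {m k : ℕ} {x : ℝ}

noncomputable def twoStepSeries (c : ℕ → ℝ) (k : ℕ) (x : ℝ) : ℝ :=
  ∑' i, c i * x ^ (2 * i + k)

def derivCoeff (c : ℕ → ℝ) (k i : ℕ) : ℝ := (2 * i + k + 1) * c i

lemma summable_twoStepSeries (hc : c =O[atTop] fun i ↦ (i : ℝ) ^ m) (hx : |x| < 1) (k : ℕ) :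
    Summable fun i ↦ c i * x ^ (2 * i + k) := by
  have hx2 : ‖x ^ 2‖ < 1 := by
    rw [norm_pow, Real.norm_eq_abs, sq_lt_one_iff_abs_lt_one, abs_abs]; exact hx
  refine summable_of_isBigO_nat (summable_pow_mul_geometric_of_norm_lt_one m hx2).norm ?_
  refine (((hc.mul (isBigO_refl (fun i : ℕ ↦ (x ^ 2) ^ i) atTop)).const_mul_left
    (x ^ k)).norm_right).congr_left fun i ↦ ?_
  rw [← pow_mul, pow_add]; ring

lemma isBigO_derivCoeff (hc : c =O[atTop] fun i ↦ (i : ℝ) ^ m) (k : ℕ) :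
    derivCoeff c k =O[atTop] fun i ↦ (i : ℝ) ^ (m + 1) := by
  have hlin : (fun i : ℕ ↦ (2 * i + k + 1 : ℝ)) =O[atTop] fun i ↦ (i : ℝ) := by
    refine IsBigO.of_bound (k + 3) ?_
    filter_upwards [eventually_ge_atTop 1] with i hi
    have hi' : (1 : ℝ) ≤ i := by exact_mod_cast hi
    rw [Real.norm_of_nonneg (by positivity), Real.norm_of_nonneg (by positivity)]
    nlinarith
  show (fun i : ℕ ↦ (2 * i + k + 1 : ℝ) * c i) =O[atTop] _
  simpa only [pow_succ'] using hlin.mul hc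

lemma hasDerivAt_twoStepSeries (hc : c =O[atTop] fun i ↦ (i : ℝ) ^ m) (hx : |x| < 1) (k : ℕ) :
    HasDerivAt (twoStepSeries c (k + 1)) (twoStepSeries (derivCoeff c k) k x) x := by
  obtain ⟨r, hxr, hr⟩ := exists_between hx
  have hr0 : 0 ≤ r := (abs_nonneg x).trans hxr.le
  have hbound := summable_twoStepSeries (isBigO_derivCoeff hc k).norm_left
    (by rwa [abs_of_nonneg hr0]) k
  refine hasDerivAt_tsum_of_isPreconnected hbound isOpen_Ioo (convex_Ioo (-r) r).isPreconnected
    (g := fun i y ↦ c i * y ^ (2 * i + (k + 1)))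
    (g' := fun i y ↦ derivCoeff c k i * y ^ (2 * i + k)) (fun i y _ ↦ ?_) (fun i y hy ↦ ?_)
    (abs_lt.1 hxr) (summable_twoStepSeries hc hx (k + 1)) (abs_lt.1 hxr)
  · refine ((hasDerivAt_pow (2 * i + (k + 1)) y).const_mul (c i)).congr_deriv ?_
    rw [show 2 * i + (k + 1) - 1 = 2 * i + k by omega, derivCoeff]
    push_cast; ring
  · rw [norm_mul, norm_pow, Real.norm_eq_abs]
    gcongr
    exact (abs_lt.2 hy).le

lemma twoStepSeries_succ_apply_zero (c : ℕ → ℝ) (k : ℕ) : twoStepSeries c (k + 1) 0 = 0 := by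
  simp [twoStepSeries]

lemma twoStepSeries_eq_add (hs : Summable fun i ↦ c i * x ^ (2 * i + k)) :
    twoStepSeries c k x = c 0 * x ^ k + x ^ 2 * twoStepSeries (fun i ↦ c (i + 1)) k x := by
  rw [twoStepSeries, hs.tsum_eq_zero_add, twoStepSeries, ← tsum_mul_left]
  congr 1
  · simp
  · congr 1; ext i; ring

lemma mul_twoStepSeries (j k : ℕ) :
    x ^ j * twoStepSeries c k x = twoStepSeries c (k + j) x := by
  rw [twoStepSeries, twoStepSeries, ← tsum_mul_left]
  congr 1; ext i; ring

lemma twoStepSeries_add (hc : Summable fun i ↦ c i * x ^ (2 * i + k))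
    (hd : Summable fun i ↦ d i * x ^ (2 * i + k)) :
    twoStepSeries (c + d) k x = twoStepSeries c k x + twoStepSeries d k x := by
  rw [twoStepSeries, twoStepSeries, twoStepSeries, ← hc.tsum_add hd]
  congr 1; ext i; simp only [Pi.add_apply]; ring

lemma one_sub_sq_mul_twoStepSeries (hc : Summable fun i ↦ c i * x ^ (2 * i + k))
    (hd : Summable fun i ↦ d i * x ^ (2 * i + k)) (hrec : ∀ i, c (i + 1) = c i + d i) :
    (1 - x ^ 2) * twoStepSeries c k x = c 0 * x ^ k + x ^ 2 * twoStepSeries d k x := by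
  have hshift := twoStepSeries_eq_add hc
  rw [show (fun i ↦ c (i + 1)) = c + d from funext hrec, twoStepSeries_add hc hd] at hshift
  linear_combination hshift

end TwoStepSeries

section Coefficients

noncomputable def harmonicSq (n : ℕ) : ℝ := ∑ j ∈ range n, 1 / ((j : ℝ) + 1) ^ 2

noncomputable def arcsinSqCoeff (i : ℕ) : ℝ :=
  4 ^ (i + 1) / (((i : ℝ) + 1) ^ 2 * (i + 1).centralBinom)

noncomputable def arcsinCubeCoeff (i : ℕ) : ℝ :=
  4 ^ (i + 1) * harmonicSq (i + 1) / ((2 * (i : ℝ) + 3) * (i + 1).centralBinom)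

lemma harmonicSq_nonneg (n : ℕ) : 0 ≤ harmonicSq n :=
  sum_nonneg fun j _ ↦ by positivity

lemma harmonicSq_le (n : ℕ) : harmonicSq n ≤ n := by
  calc harmonicSq n ≤ ∑ _j ∈ range n, (1 : ℝ) :=
        sum_le_sum fun j _ ↦ div_le_one_of_le₀ (one_le_pow₀ (by simp)) (by positivity)
    _ = n := by simp

lemma centralBinom_succ_succ (i : ℕ) :
    ((i + 2).centralBinom : ℝ) = 2 * (2 * i + 3) * (i + 1).centralBinom / (i + 2) := by
  rw [eq_div_iff (by positivity)]
  exact_mod_cast (mul_comm _ _).trans (Nat.succ_mul_centralBinom_succ (i + 1))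

lemma four_pow_le_centralBinom (i : ℕ) :
    (4 : ℝ) ^ (i + 1) ≤ 2 * (i + 1) * (i + 1).centralBinom := by
  exact_mod_cast Nat.four_pow_le_two_mul_self_mul_centralBinom (i + 1) i.succ_pos

lemma arcsinSqCoeff_zero : arcsinSqCoeff 0 = 2 := by
  norm_num [arcsinSqCoeff, Nat.centralBinom, Nat.choose]

lemma arcsinCubeCoeff_zero : arcsinCubeCoeff 0 = 2 / 3 := by
  norm_num [arcsinCubeCoeff, harmonicSq, Nat.centralBinom, Nat.choose]

lemma arcsinSqCoeff_succ (i : ℕ) :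
    (2 * i + 3) * (2 * i + 4) * arcsinSqCoeff (i + 1) = (2 * i + 2) ^ 2 * arcsinSqCoeff i := by
  have := (i + 1).centralBinom_pos
  simp only [arcsinSqCoeff, centralBinom_succ_succ]
  push_cast
  field_simp
  ring

lemma arcsinCubeCoeff_succ (i : ℕ) :
    (2 * i + 5) * arcsinCubeCoeff (i + 1) =
      arcsinSqCoeff (i + 1) + (2 * i + 4) * arcsinCubeCoeff i := by
  have := (i + 1).centralBinom_pos
  simp only [arcsinSqCoeff, arcsinCubeCoeff, centralBinom_succ_succ, harmonicSq,
    sum_range_succ _ (i + 1)]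
  push_cast
  field_simp
  ring

lemma abs_arcsinSqCoeff_le (i : ℕ) : |arcsinSqCoeff i| ≤ 2 := by
  have hC : (0 : ℝ) < (i + 1).centralBinom := by exact_mod_cast (i + 1).centralBinom_pos
  have hi : (0 : ℝ) ≤ i := i.cast_nonneg
  rw [abs_of_nonneg (by unfold arcsinSqCoeff; positivity), arcsinSqCoeff,
    div_le_iff₀ (by positivity)]
  nlinarith [four_pow_le_centralBinom i, mul_nonneg hi hC.le, mul_nonneg (mul_nonneg hi hi) hC.le]

lemma abs_arcsinCubeCoeff_le (i : ℕ) : |arcsinCubeCoeff i| ≤ i + 1 := by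
  have hC : (0 : ℝ) < (i + 1).centralBinom := by exact_mod_cast (i + 1).centralBinom_pos
  have hH := harmonicSq_le (i + 1)
  push_cast at hH
  rw [abs_of_nonneg (by unfold arcsinCubeCoeff; have := harmonicSq_nonneg (i + 1); positivity),
    arcsinCubeCoeff, div_le_iff₀ (by positivity)]
  calc (4 : ℝ) ^ (i + 1) * harmonicSq (i + 1) ≤ 2 * (i + 1) * (i + 1).centralBinom * (i + 1) :=
        mul_le_mul (four_pow_le_centralBinom i) hH (harmonicSq_nonneg _) (by positivity)
    _ ≤ (i + 1) * ((2 * i + 3) * (i + 1).centralBinom) := by nlinarith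

lemma isBigO_arcsinSqCoeff : arcsinSqCoeff =O[atTop] fun i ↦ (i : ℝ) ^ 0 :=
  IsBigO.of_bound 2 (.of_forall fun i ↦ by simpa using abs_arcsinSqCoeff_le i)

lemma isBigO_arcsinCubeCoeff : arcsinCubeCoeff =O[atTop] fun i ↦ (i : ℝ) ^ 1 := by
  refine IsBigO.of_bound 2 ?_
  filter_upwards [eventually_ge_atTop 1] with i hi
  have hi' : (1 : ℝ) ≤ i := by exact_mod_cast hi
  rw [Real.norm_eq_abs, pow_one, Real.norm_of_nonneg (by positivity)]
  linarith [abs_arcsinCubeCoeff_le i]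

lemma twoStepSeries_arcsinSqCoeff_ode {x : ℝ} (hx : |x| < 1) :
    (1 - x ^ 2) * twoStepSeries (derivCoeff (derivCoeff arcsinSqCoeff 1) 0) 0 x
      - x * twoStepSeries (derivCoeff arcsinSqCoeff 1) 1 x = 4 := by
  have ha₁ := isBigO_derivCoeff isBigO_arcsinSqCoeff 1
  have h := one_sub_sq_mul_twoStepSeries (summable_twoStepSeries (isBigO_derivCoeff ha₁ 0) hx 0)
    (summable_twoStepSeries ha₁ hx 0) fun i ↦ by
      simp only [derivCoeff]; push_cast; linear_combination arcsinSqCoeff_succ i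
  rw [← mul_twoStepSeries 1 0, h]
  norm_num [derivCoeff, arcsinSqCoeff_zero]
  ring

lemma twoStepSeries_arcsinCubeCoeff_ode {x : ℝ} (hx : |x| < 1) :
    (1 - x ^ 2) * twoStepSeries (derivCoeff arcsinCubeCoeff 2) 2 x
      - x * twoStepSeries arcsinCubeCoeff 3 x = twoStepSeries arcsinSqCoeff 2 x := by
  have hb := summable_twoStepSeries isBigO_arcsinCubeCoeff hx 2
  have ha' : Summable fun i ↦ arcsinSqCoeff (i + 1) * x ^ (2 * i + 2) := by
    simpa [mul_add, add_assoc] using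
      (summable_nat_add_iff 1).2 (summable_twoStepSeries isBigO_arcsinSqCoeff hx 0)
  have h := one_sub_sq_mul_twoStepSeries
    (summable_twoStepSeries (isBigO_derivCoeff isBigO_arcsinCubeCoeff 2) hx 2)
    (d := (fun i ↦ arcsinSqCoeff (i + 1)) + arcsinCubeCoeff)
    (by simpa only [Pi.add_apply, add_mul] using ha'.add hb) fun i ↦ by
      simp only [derivCoeff, Pi.add_apply]; push_cast; linear_combination arcsinCubeCoeff_succ i
  have hsq := twoStepSeries_eq_add (summable_twoStepSeries isBigO_arcsinSqCoeff hx 2)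
  rw [← mul_twoStepSeries 1 2, h, twoStepSeries_add ha' hb, hsq]
  norm_num [derivCoeff, arcsinCubeCoeff_zero, arcsinSqCoeff_zero]
  ring

end Coefficients

section ODE

variable {x : ℝ}

lemma one_sub_sq_pos (hx : x ∈ Ioo (-1 : ℝ) 1) : 0 < 1 - x ^ 2 := by
  rw [sub_pos, sq_lt_one_iff_abs_lt_one, abs_lt]; exact hx

lemma hasDerivAt_sqrt_one_sub_sq (hx : x ∈ Ioo (-1 : ℝ) 1) :
    HasDerivAt (fun y ↦ √(1 - y ^ 2)) (-x / √(1 - x ^ 2)) x := by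
  refine (((hasDerivAt_pow 2 x).const_sub 1).sqrt (one_sub_sq_pos hx).ne').congr_deriv ?_
  have := sqrt_pos.2 (one_sub_sq_pos hx)
  field_simp
  ring

lemma hasDerivAt_sqrt_one_sub_sq_mul {F : ℝ → ℝ} {F' : ℝ} (hF : HasDerivAt F F' x)
    (hx : x ∈ Ioo (-1 : ℝ) 1) :
    HasDerivAt (fun y ↦ √(1 - y ^ 2) * F y)
      (((1 - x ^ 2) * F' - x * F x) / √(1 - x ^ 2)) x := by
  refine ((hasDerivAt_sqrt_one_sub_sq hx).mul hF).congr_deriv ?_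
  have := sqrt_pos.2 (one_sub_sq_pos hx)
  field_simp
  rw [sq_sqrt (one_sub_sq_pos hx).le]
  ring

lemma hasDerivAt_div_sqrt_one_sub_sq {h : ℝ → ℝ} {h' : ℝ} (hh : HasDerivAt h h' x)
    (hx : x ∈ Ioo (-1 : ℝ) 1) :
    HasDerivAt (fun y ↦ h y / √(1 - y ^ 2))
      ((√(1 - x ^ 2) * h' + x * (h x / √(1 - x ^ 2))) / (1 - x ^ 2)) x := by
  have hsqrt := sqrt_pos.2 (one_sub_sq_pos hx)
  refine (hh.div (hasDerivAt_sqrt_one_sub_sq hx) hsqrt.ne').congr_deriv ?_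
  have := (one_sub_sq_pos hx).ne'
  field_simp
  rw [sq_sqrt (one_sub_sq_pos hx).le]
  ring

theorem eqOn_of_ode {F G w : ℝ → ℝ}
    (hF : ∀ x ∈ Ioo (-1 : ℝ) 1, HasDerivAt F ((w x + x * F x) / (1 - x ^ 2)) x)
    (hG : ∀ x ∈ Ioo (-1 : ℝ) 1, HasDerivAt G ((w x + x * G x) / (1 - x ^ 2)) x)
    (h0 : F 0 = G 0) : EqOn F G (Ioo (-1) 1) := by
  have hF' x hx := hasDerivAt_sqrt_one_sub_sq_mul (hF x hx) hx
  have hG' x hx := hasDerivAt_sqrt_one_sub_sq_mul (hG x hx) hx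
  have key : EqOn (fun y ↦ √(1 - y ^ 2) * F y) (fun y ↦ √(1 - y ^ 2) * G y) (Ioo (-1) 1) :=
    isOpen_Ioo.eqOn_of_deriv_eq (convex_Ioo _ _).isPreconnected
      (fun x hx ↦ (hF' x hx).differentiableAt.differentiableWithinAt)
      (fun x hx ↦ (hG' x hx).differentiableAt.differentiableWithinAt)
      (fun x hx ↦ by
        have := (one_sub_sq_pos hx).ne'
        rw [(hF' x hx).deriv, (hG' x hx).deriv]
        field_simp
        ring)
      (by norm_num : (0 : ℝ) ∈ Set.Ioo (-1) 1) (by simp [h0])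
  exact fun x hx ↦ mul_left_cancel₀ (sqrt_pos.2 (one_sub_sq_pos hx)).ne' (key hx)

lemma hasDerivAt_arcsin_of_mem (hx : x ∈ Ioo (-1 : ℝ) 1) :
    HasDerivAt arcsin (1 / √(1 - x ^ 2)) x :=
  hasDerivAt_arcsin hx.1.ne' hx.2.ne

end ODE

theorem twoStepSeries_arcsinSqCoeff_eqOn :
    EqOn (twoStepSeries arcsinSqCoeff 2) (fun x ↦ 2 * arcsin x ^ 2) (Ioo (-1) 1) := by
  have hderiv : EqOn (twoStepSeries (derivCoeff arcsinSqCoeff 1) 1)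
      (fun x ↦ 4 * arcsin x / √(1 - x ^ 2)) (Ioo (-1) 1) := by
    refine eqOn_of_ode (w := fun _ ↦ 4) (fun x hx ↦ ?_) (fun x hx ↦ ?_)
      (by simp [twoStepSeries_succ_apply_zero _ 0])
    · refine (hasDerivAt_twoStepSeries (isBigO_derivCoeff isBigO_arcsinSqCoeff 1)
        (abs_lt.2 hx) 0).congr_deriv ?_
      rw [eq_div_iff (one_sub_sq_pos hx).ne']
      linear_combination twoStepSeries_arcsinSqCoeff_ode (abs_lt.2 hx)
    · refine (hasDerivAt_div_sqrt_one_sub_sq ((hasDerivAt_arcsin_of_mem hx).const_mul 4)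
        hx).congr_deriv ?_
      have := sqrt_pos.2 (one_sub_sq_pos hx)
      field_simp
  have hF x (hx : x ∈ Ioo (-1 : ℝ) 1) :=
    hasDerivAt_twoStepSeries isBigO_arcsinSqCoeff (abs_lt.2 hx) 1
  have hG x (hx : x ∈ Ioo (-1 : ℝ) 1) :=
    ((hasDerivAt_arcsin_of_mem hx).fun_pow 2).const_mul 2
  refine isOpen_Ioo.eqOn_of_deriv_eq (convex_Ioo _ _).isPreconnected
    (fun x hx ↦ (hF x hx).differentiableAt.differentiableWithinAt)
    (fun x hx ↦ (hG x hx).differentiableAt.differentiableWithinAt) (fun x hx ↦ ?_)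
    (by norm_num : (0 : ℝ) ∈ Set.Ioo (-1) 1) (by simp [twoStepSeries_succ_apply_zero _ 1])
  rw [(hF x hx).deriv, (hG x hx).deriv, hderiv hx]
  ring

theorem twoStepSeries_arcsinCubeCoeff_eqOn :
    EqOn (twoStepSeries arcsinCubeCoeff 3) (fun x ↦ 2 / 3 * arcsin x ^ 3 / √(1 - x ^ 2))
      (Ioo (-1) 1) := by
  refine eqOn_of_ode (w := twoStepSeries arcsinSqCoeff 2) (fun x hx ↦ ?_) (fun x hx ↦ ?_)
    (by simp [twoStepSeries_succ_apply_zero _ 2])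
  · refine (hasDerivAt_twoStepSeries isBigO_arcsinCubeCoeff (abs_lt.2 hx) 2).congr_deriv ?_
    rw [eq_div_iff (one_sub_sq_pos hx).ne']
    linear_combination twoStepSeries_arcsinCubeCoeff_ode (abs_lt.2 hx)
  · refine (hasDerivAt_div_sqrt_one_sub_sq
      (((hasDerivAt_arcsin_of_mem hx).fun_pow 3).const_mul (2 / 3)) hx).congr_deriv ?_
    have := sqrt_pos.2 (one_sub_sq_pos hx)
    rw [twoStepSeries_arcsinSqCoeff_eqOn hx]
    field_simp
    ring

lemma arcsin_sqrt_three_div_two : arcsin (√3 / 2) = π / 3 := by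
  rw [← sin_pi_div_three, arcsin_sin (by linarith [pi_pos]) (by linarith [pi_pos])]

lemma sqrt_three_div_two_sq : (√3 / 2) ^ 2 = 3 / 4 := by
  rw [div_pow, sq_sqrt (by norm_num)]; norm_num

lemma twoStepSeries_arcsinCubeCoeff_sqrt_three_div_two :
    twoStepSeries arcsinCubeCoeff 3 (√3 / 2) = √3 / 2 * ∑' i : ℕ, (3 : ℝ) ^ (i + 1) *
      (∑ j ∈ range (i + 1), (1 : ℝ) / ((j : ℝ) + 1) ^ 2) /
        ((2 * ((i : ℝ) + 1) + 1) * ((Nat.choose (2 * (i + 1)) (i + 1)) : ℝ)) := by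
  rw [twoStepSeries, ← tsum_mul_left]
  refine tsum_congr fun i ↦ ?_
  have := (i + 1).centralBinom_pos
  rw [show 2 * i + 3 = 2 * (i + 1) + 1 by ring, pow_succ, pow_mul, sqrt_three_div_two_sq,
    arcsinCubeCoeff, harmonicSq, Nat.centralBinom, div_pow]
  field_simp
  ring

end CentralBinomArcsin

theorem stmt_11 : (∑' i : ℕ, (3:ℝ)^(i+1) * (∑ j ∈ Finset.range (i+1), (1:ℝ)/((j:ℝ)+1)^2) / ((2*((i:ℝ)+1)+1) * ((Nat.choose (2*(i+1)) (i+1)) : ℝ))) = 8 * Real.pi^3 / (81 * Real.sqrt 3) := by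
  have h := CentralBinomArcsin.twoStepSeries_arcsinCubeCoeff_eqOn (x := √3 / 2)
    ⟨by linarith [sqrt_nonneg 3], by nlinarith [sq_sqrt (show (0 : ℝ) ≤ 3 by norm_num)]⟩
  dsimp only at h
  rw [CentralBinomArcsin.twoStepSeries_arcsinCubeCoeff_sqrt_three_div_two,
    CentralBinomArcsin.arcsin_sqrt_three_div_two, CentralBinomArcsin.sqrt_three_div_two_sq,
    show (1 : ℝ) - 3 / 4 = (1 / 2) ^ 2 by norm_num, sqrt_sq (by norm_num)] at h
  rw [eq_div_iff (by positivity)]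
  linear_combination 162 * h
end

section
/- The infinite sum over i ≥ 1 of 2^i · (∑_{j=1}^i 1/j²)/((2i+1) · binom(2i, i)) equals π³/48. -/
/-!
Write `a n = 4 ^ n / ((2n+1) C(2n,n))` and `H n = ∑_{j ≤ n} 1 / j²`. The power series
`∑ a n x^(2n+1)`, `∑ a n / (n+1) x^(2n+2)` and `∑ a n H n x^(2n+1)` are `arcsin x / √(1-x²)`,
`arcsin² x` and `(2/3) arcsin³ x / √(1-x²)`. The recurrence `(2n+3) a (n+1) = (2n+2) a n` turns
the odd series into solutions of `(1-x²) f' - x f = g`, i.e. `(√(1-x²) f)' = g / √(1-x²)`, with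
`g = 1`, resp. `g = 2 × (the even series)`; so each identity follows by comparing derivatives on
`(-1, 1)` and values at `0`. At `x = sin (π/4) = 1/√2` the third identity is the claimed sum.
-/

open Real Finset

lemma summable_succ_mul_geometric {ρ : ℝ} (h0 : 0 ≤ ρ) (h1 : ρ < 1) :
    Summable fun n : ℕ => ((n : ℝ) + 1) * ρ ^ n := by
  have hρ : ‖ρ‖ < 1 := by rwa [norm_of_nonneg h0]
  simpa [add_mul, pow_one] using
    (summable_pow_mul_geometric_of_norm_lt_one 1 hρ).add (summable_geometric_of_lt_one h0 h1)

lemma hasDerivAt_sqrt_one_sub_sq_mul {f : ℝ → ℝ} {f' x : ℝ} (hx : |x| < 1)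
    (hf : HasDerivAt f f' x) :
    HasDerivAt (fun y => √(1 - y ^ 2) * f y) (((1 - x ^ 2) * f' - x * f x) / √(1 - x ^ 2)) x := by
  have hpos : 0 < 1 - x ^ 2 := by nlinarith [sq_abs x, abs_nonneg x]
  have hsqrt := ((hasDerivAt_pow 2 x).const_sub 1).sqrt hpos.ne'
  refine (hsqrt.mul hf).congr_deriv ?_
  have hs : √(1 - x ^ 2) ≠ 0 := (sqrt_pos.2 hpos).ne'
  field_simp
  rw [sq_sqrt hpos.le]
  push_cast
  ring

lemma eqOn_of_hasDerivAt {f g f' : ℝ → ℝ} {s : Set ℝ} (hs : IsOpen s) (hs' : IsPreconnected s)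
    (hf : ∀ x ∈ s, HasDerivAt f (f' x) x) (hg : ∀ x ∈ s, HasDerivAt g (f' x) x) {x₀ : ℝ}
    (hx₀ : x₀ ∈ s) (h : f x₀ = g x₀) : Set.EqOn f g s :=
  hs.eqOn_of_deriv_eq hs' (fun x hx => (hf x hx).differentiableAt.differentiableWithinAt)
    (fun x hx => (hg x hx).differentiableAt.differentiableWithinAt)
    (fun x hx => (hf x hx).deriv.trans (hg x hx).deriv.symm) hx₀ h

noncomputable def evenPowSeries (c : ℕ → ℝ) (k : ℕ) (x : ℝ) : ℝ := ∑' n, c n * x ^ (2 * n + k)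

lemma evenPowSeries_const_mul (r : ℝ) (c : ℕ → ℝ) (k : ℕ) (x : ℝ) :
    evenPowSeries (fun n => r * c n) k x = r * evenPowSeries c k x := by
  simp only [evenPowSeries, mul_assoc, tsum_mul_left]

lemma evenPowSeries_zero_right (c : ℕ → ℝ) {k : ℕ} (hk : k ≠ 0) : evenPowSeries c k 0 = 0 := by
  simp [evenPowSeries, hk]

section EvenPowSeries

variable {c : ℕ → ℝ} {C : ℝ}

lemma norm_mul_pow_two_mul_add_le (hc : ∀ n, |c n| ≤ C * (n + 1)) {x r : ℝ} (hx : |x| ≤ r)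
    (hr : r ≤ 1) (n k : ℕ) : ‖c n * x ^ (2 * n + k)‖ ≤ C * (n + 1) * (r ^ 2) ^ n := by
  have hr0 : 0 ≤ r := (abs_nonneg x).trans hx
  have hpow : |x| ^ (2 * n + k) ≤ (r ^ 2) ^ n := calc
    |x| ^ (2 * n + k) ≤ |x| ^ (2 * n) :=
        pow_le_pow_of_le_one (abs_nonneg x) (hx.trans hr) (by omega)
    _ ≤ r ^ (2 * n) := pow_le_pow_left₀ (abs_nonneg x) hx _
    _ = (r ^ 2) ^ n := pow_mul r 2 n
  rw [norm_eq_abs, abs_mul, abs_pow]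
  exact mul_le_mul (hc n) hpow (by positivity) ((abs_nonneg _).trans (hc n))

lemma summable_evenPowSeries (hc : ∀ n, |c n| ≤ C * (n + 1)) (k : ℕ) {x : ℝ} (hx : |x| < 1) :
    Summable fun n => c n * x ^ (2 * n + k) := by
  have hρ : |x| ^ 2 < 1 := pow_lt_one₀ (abs_nonneg x) hx two_ne_zero
  refine .of_norm_bounded ?_ (norm_mul_pow_two_mul_add_le hc le_rfl hx.le · k)
  simpa [mul_assoc] using (summable_succ_mul_geometric (by positivity) hρ).mul_left C

lemma hasDerivAt_evenPowSeries (hc : ∀ n, |c n| ≤ C) (m : ℕ) {x : ℝ} (hx : |x| < 1) :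
    HasDerivAt (evenPowSeries c (m + 1))
      (evenPowSeries (fun n => (2 * n + m + 1) * c n) m x) x := by
  have hC : 0 ≤ C := (abs_nonneg _).trans (hc 0)
  have hc' : ∀ n, |(2 * n + m + 1) * c n| ≤ ((m + 2) * C) * (n + 1) := fun n => by
    rw [abs_mul, abs_of_nonneg (by positivity)]
    calc (2 * n + m + 1) * |c n| ≤ (2 * n + m + 1) * C := by gcongr; exact hc n
      _ ≤ (m + 2) * C * (n + 1) := by
        nlinarith [mul_nonneg hC (mul_nonneg (Nat.cast_nonneg m : (0 : ℝ) ≤ m) (Nat.cast_nonneg n))]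
  obtain ⟨r, hxr, hr1⟩ := exists_between hx
  have hρ : r ^ 2 < 1 := pow_lt_one₀ ((abs_nonneg x).trans hxr.le) hr1 two_ne_zero
  have hxt : x ∈ Set.Ioo (-r) r := abs_lt.1 hxr
  refine hasDerivAt_tsum_of_isPreconnected
    (((summable_succ_mul_geometric (sq_nonneg r) hρ).mul_left ((m + 2) * C)).congr
      fun n => (mul_assoc _ _ _).symm) isOpen_Ioo isPreconnected_Ioo
    (fun n y _ => ?_)
    (fun n y hy => norm_mul_pow_two_mul_add_le hc' (abs_lt.2 hy).le hr1.le n m) hxt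
    (summable_evenPowSeries (C := C) (fun n => ?_) (m + 1) hx) hxt
  · refine ((hasDerivAt_pow (2 * n + (m + 1)) y).const_mul (c n)).congr_deriv ?_
    rw [show 2 * n + (m + 1) - 1 = 2 * n + m by omega]
    push_cast
    ring
  · nlinarith [hc n, (Nat.cast_nonneg n : (0 : ℝ) ≤ n)]

lemma one_sub_sq_mul_evenPowSeries_sub {d : ℕ → ℝ} (hc : ∀ n, |c n| ≤ C)
    (hrec : ∀ n, (2 * n + 3) * c (n + 1) = (2 * n + 2) * c n + d n) {x : ℝ} (hx : |x| < 1) :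
    (1 - x ^ 2) * evenPowSeries (fun n => (2 * n + 1) * c n) 0 x - x * evenPowSeries c 1 x =
      c 0 + evenPowSeries d 2 x := by
  have hc' : ∀ n, |c n| ≤ C * (n + 1) := fun n => by
    nlinarith [hc n, (Nat.cast_nonneg n : (0 : ℝ) ≤ n), (abs_nonneg _).trans (hc 0)]
  have hd : ∀ n, |d n| ≤ (5 * C) * (n + 1) := fun n => by
    have h0 := abs_le.1 (hc n)
    have h1 := abs_le.1 (hc (n + 1))
    have hn : (0 : ℝ) ≤ n := Nat.cast_nonneg n
    rw [show d n = (2 * n + 3) * c (n + 1) - (2 * n + 2) * c n by linarith [hrec n]]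
    exact abs_le.2 ⟨by nlinarith, by nlinarith⟩
  have hb : ∀ n, |(2 * n + 1) * c n| ≤ (2 * C) * (n + 1) := fun n => by
    rw [abs_mul, abs_of_nonneg (by positivity)]
    nlinarith [hc n, (Nat.cast_nonneg n : (0 : ℝ) ≤ n), abs_nonneg (c n)]
  have hD := (summable_evenPowSeries hb 0 hx).hasSum
  have hS := (summable_evenPowSeries hc' 1 hx).hasSum
  have hE := (summable_evenPowSeries hd 2 hx).hasSum
  have hshift := (hasSum_nat_add_iff' 1).2 hD
  have hsum := ((hD.mul_left (x ^ 2)).add (hS.mul_left x)).add hE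
  have key := hshift.unique (hsum.congr_fun fun n => ?_)
  · simp only [evenPowSeries, add_zero]
    simp only [add_zero, range_one, sum_singleton, CharP.cast_eq_zero, mul_zero, zero_add,
      one_mul, pow_zero, mul_one] at key
    linear_combination key
  · push_cast
    linear_combination x ^ (2 * n + 2) * hrec n

lemma hasDerivAt_sqrt_one_sub_sq_mul_evenPowSeries {d : ℕ → ℝ} (hc : ∀ n, |c n| ≤ C)
    (hrec : ∀ n, (2 * n + 3) * c (n + 1) = (2 * n + 2) * c n + d n) {x : ℝ} (hx : |x| < 1) :
    HasDerivAt (fun y => √(1 - y ^ 2) * evenPowSeries c 1 y)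
      ((c 0 + evenPowSeries d 2 x) / √(1 - x ^ 2)) x := by
  have h := hasDerivAt_sqrt_one_sub_sq_mul hx (hasDerivAt_evenPowSeries hc 0 hx)
  simp only [Nat.cast_zero, add_zero] at h
  rwa [one_sub_sq_mul_evenPowSeries_sub hc hrec hx] at h

end EvenPowSeries

noncomputable def arcsinCoeff (n : ℕ) : ℝ := 4 ^ n / ((2 * n + 1) * n.centralBinom)

lemma arcsinCoeff_zero : arcsinCoeff 0 = 1 := by simp [arcsinCoeff]

lemma arcsinCoeff_nonneg (n : ℕ) : 0 ≤ arcsinCoeff n := by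
  unfold arcsinCoeff; positivity

lemma arcsinCoeff_le_one (n : ℕ) : arcsinCoeff n ≤ 1 := by
  have : (0 : ℝ) < n.centralBinom := by exact_mod_cast n.centralBinom_pos
  rw [arcsinCoeff, div_le_one (by positivity)]
  rcases n.eq_zero_or_pos with rfl | hn
  · simp
  have h : (4 : ℝ) ^ n ≤ 2 * n * n.centralBinom := by
    exact_mod_cast Nat.four_pow_le_two_mul_self_mul_centralBinom n hn
  linarith

lemma abs_arcsinCoeff_le_one (n : ℕ) : |arcsinCoeff n| ≤ 1 := by
  rw [abs_of_nonneg (arcsinCoeff_nonneg n)]; exact arcsinCoeff_le_one n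

lemma arcsinCoeff_succ (n : ℕ) :
    (2 * n + 3) * arcsinCoeff (n + 1) = (2 * n + 2) * arcsinCoeff n := by
  have h : ((n + 1 : ℕ) : ℝ) * (n + 1).centralBinom = 2 * (2 * n + 1) * n.centralBinom := by
    exact_mod_cast Nat.succ_mul_centralBinom_succ n
  have h0 : (0 : ℝ) < n.centralBinom := by exact_mod_cast n.centralBinom_pos
  have h1 : (0 : ℝ) < (n + 1).centralBinom := by exact_mod_cast (n + 1).centralBinom_pos
  push_cast at h
  unfold arcsinCoeff
  push_cast
  field_simp
  linear_combination (-(4 * n + 6) * 4 ^ n : ℝ) * h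

lemma sqrt_one_sub_sq_mul_evenPowSeries_arcsinCoeff {x : ℝ} (hx : |x| < 1) :
    √(1 - x ^ 2) * evenPowSeries arcsinCoeff 1 x = arcsin x := by
  refine eqOn_of_hasDerivAt (f := fun y => √(1 - y ^ 2) * evenPowSeries arcsinCoeff 1 y)
    (g := arcsin) (f' := fun y => 1 / √(1 - y ^ 2)) isOpen_Ioo isPreconnected_Ioo
    (fun y hy => ?_) (fun y hy => hasDerivAt_arcsin hy.1.ne' hy.2.ne)
    (by norm_num : (0 : ℝ) ∈ Set.Ioo (-1) 1) ?_ (abs_lt.1 hx)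
  · have h := hasDerivAt_sqrt_one_sub_sq_mul_evenPowSeries abs_arcsinCoeff_le_one
      (d := fun _ => 0) (fun n => by rw [arcsinCoeff_succ, add_zero]) (abs_lt.2 hy)
    simpa [arcsinCoeff_zero, evenPowSeries] using h
  · simp [evenPowSeries_zero_right]

lemma abs_arcsinCoeff_div_succ_le_one (n : ℕ) : |arcsinCoeff n / (n + 1)| ≤ 1 := by
  rw [abs_div, abs_of_pos (by positivity : (0 : ℝ) < n + 1), div_le_one (by positivity)]
  linarith [abs_arcsinCoeff_le_one n, (Nat.cast_nonneg n : (0 : ℝ) ≤ n)]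

lemma evenPowSeries_arcsinCoeff_div_succ {x : ℝ} (hx : |x| < 1) :
    evenPowSeries (fun n => arcsinCoeff n / (n + 1)) 2 x = arcsin x ^ 2 := by
  refine eqOn_of_hasDerivAt (f := evenPowSeries (fun n => arcsinCoeff n / (n + 1)) 2)
    (g := fun y => arcsin y ^ 2)
    (f' := fun y => 2 * arcsin y / √(1 - y ^ 2)) isOpen_Ioo isPreconnected_Ioo
    (fun y hy => ?_) (fun y hy => ?_) (by norm_num : (0 : ℝ) ∈ Set.Ioo (-1) 1) ?_ (abs_lt.1 hx)
  · have hcoeff : (fun n : ℕ => (2 * n + (1 : ℕ) + 1) * (arcsinCoeff n / (n + 1))) =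
        fun n => 2 * arcsinCoeff n := funext fun n => by
      field_simp
      push_cast
      ring
    have h := hasDerivAt_evenPowSeries abs_arcsinCoeff_div_succ_le_one 1 (abs_lt.2 hy)
    rw [hcoeff, evenPowSeries_const_mul] at h
    have hs : √(1 - y ^ 2) ≠ 0 := (sqrt_pos.2 (by nlinarith [hy.1, hy.2])).ne'
    rw [← sqrt_one_sub_sq_mul_evenPowSeries_arcsinCoeff (abs_lt.2 hy)]
    convert h using 1
    rw [mul_div_assoc, mul_div_cancel_left₀ _ hs]
  · refine ((hasDerivAt_arcsin hy.1.ne' hy.2.ne).fun_pow 2).congr_deriv ?_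
    norm_num
    ring
  · simp [evenPowSeries_zero_right]

noncomputable def sumInvSq (n : ℕ) : ℝ := ∑ j ∈ range n, 1 / ((j : ℝ) + 1) ^ 2

lemma sumInvSq_succ (n : ℕ) : sumInvSq (n + 1) = sumInvSq n + 1 / ((n : ℝ) + 1) ^ 2 :=
  sum_range_succ _ _

lemma sumInvSq_nonneg (n : ℕ) : 0 ≤ sumInvSq n := by
  unfold sumInvSq; positivity

lemma sumInvSq_le (n : ℕ) : sumInvSq n ≤ π ^ 2 / 6 := by
  have h : sumInvSq n = ∑ j ∈ range (n + 1), 1 / (j : ℝ) ^ 2 := by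
    simp [sum_range_succ', sumInvSq]
  rw [h]
  exact sum_le_hasSum _ (fun i _ => by positivity) hasSum_zeta_two

lemma abs_arcsinCoeff_mul_sumInvSq_le (n : ℕ) : |arcsinCoeff n * sumInvSq n| ≤ π ^ 2 / 6 := by
  rw [abs_of_nonneg (mul_nonneg (arcsinCoeff_nonneg n) (sumInvSq_nonneg n))]
  calc arcsinCoeff n * sumInvSq n ≤ 1 * (π ^ 2 / 6) :=
        mul_le_mul (arcsinCoeff_le_one n) (sumInvSq_le n) (sumInvSq_nonneg n) zero_le_one
    _ = π ^ 2 / 6 := one_mul _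

lemma arcsinCoeff_mul_sumInvSq_succ (n : ℕ) :
    (2 * n + 3) * (arcsinCoeff (n + 1) * sumInvSq (n + 1)) =
      (2 * n + 2) * (arcsinCoeff n * sumInvSq n) + 2 * (arcsinCoeff n / (n + 1)) := by
  rw [← mul_assoc, arcsinCoeff_succ, sumInvSq_succ]
  field_simp

lemma sqrt_one_sub_sq_mul_evenPowSeries_arcsinCoeff_mul_sumInvSq {x : ℝ} (hx : |x| < 1) :
    √(1 - x ^ 2) * evenPowSeries (fun n => arcsinCoeff n * sumInvSq n) 1 x =
      2 / 3 * arcsin x ^ 3 := by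
  refine eqOn_of_hasDerivAt
    (f := fun y => √(1 - y ^ 2) * evenPowSeries (fun n => arcsinCoeff n * sumInvSq n) 1 y)
    (g := fun y => 2 / 3 * arcsin y ^ 3) (f' := fun y => 2 * arcsin y ^ 2 / √(1 - y ^ 2))
    isOpen_Ioo isPreconnected_Ioo (fun y hy => ?_) (fun y hy => ?_)
    (by norm_num : (0 : ℝ) ∈ Set.Ioo (-1) 1) ?_ (abs_lt.1 hx)
  · have h := hasDerivAt_sqrt_one_sub_sq_mul_evenPowSeries abs_arcsinCoeff_mul_sumInvSq_le
      arcsinCoeff_mul_sumInvSq_succ (abs_lt.2 hy)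
    rwa [evenPowSeries_const_mul, evenPowSeries_arcsinCoeff_div_succ (abs_lt.2 hy), sumInvSq,
      sum_range_zero, mul_zero, zero_add] at h
  · refine (((hasDerivAt_arcsin hy.1.ne' hy.2.ne).fun_pow 3).const_mul (2 / 3)).congr_deriv ?_
    norm_num
    ring
  · simp [evenPowSeries_zero_right]

lemma arcsinCoeff_mul_div_two_pow (n : ℕ) (y : ℝ) :
    arcsinCoeff n * y / 2 ^ n = 2 ^ n * y / ((2 * n + 1) * (2 * n).choose n) := by
  have : (0 : ℝ) < n.centralBinom := by exact_mod_cast n.centralBinom_pos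
  rw [arcsinCoeff, ← Nat.centralBinom_eq_two_mul_choose,
    show (4 : ℝ) ^ n = 2 ^ n * 2 ^ n by rw [← mul_pow]; norm_num]
  field_simp

lemma hasSum_arcsinCoeff_mul_sumInvSq_div_two_pow :
    HasSum (fun n => arcsinCoeff n * sumInvSq n / 2 ^ n) (π ^ 3 / 48) := by
  set x := √2 / 2 with hx_def
  have hx2 : x ^ 2 = 1 / 2 := by
    rw [div_pow, sq_sqrt zero_le_two]; norm_num
  have hx : |x| < 1 := by
    rw [← sq_lt_one_iff_abs_lt_one, hx2]; norm_num
  have harcsin : arcsin x = π / 4 := by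
    rw [hx_def, ← sin_pi_div_four]
    exact arcsin_sin (by linarith [pi_pos]) (by linarith [pi_pos])
  have hsqrt : √(1 - x ^ 2) = x := by
    rw [← cos_arcsin, harcsin, cos_pi_div_four]
  have hsum : Summable fun n => arcsinCoeff n * sumInvSq n / 2 ^ n := by
    refine .of_nonneg_of_le (fun n => by
      have := arcsinCoeff_nonneg n; have := sumInvSq_nonneg n; positivity) (fun n => ?_)
      (summable_geometric_two.mul_left (π ^ 2 / 6))
    rw [div_eq_mul_one_div, one_div_pow]
    exact mul_le_mul_of_nonneg_right (le_of_abs_le (abs_arcsinCoeff_mul_sumInvSq_le n))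
      (by positivity)
  have hseries : evenPowSeries (fun n => arcsinCoeff n * sumInvSq n) 1 x =
      (∑' n, arcsinCoeff n * sumInvSq n / 2 ^ n) * x := by
    rw [evenPowSeries, ← tsum_mul_right]
    refine tsum_congr fun n => ?_
    rw [pow_succ, pow_mul, hx2, one_div_pow]
    ring
  have key := sqrt_one_sub_sq_mul_evenPowSeries_arcsinCoeff_mul_sumInvSq hx
  rw [hsqrt, hseries, harcsin] at key
  convert hsum.hasSum
  linear_combination -2 * key + 2 * (∑' n, arcsinCoeff n * sumInvSq n / 2 ^ n) * hx2

theorem stmt_12 : (∑' i : ℕ, (2:ℝ)^(i+1) * (∑ j ∈ Finset.range (i+1), (1:ℝ)/((j:ℝ)+1)^2) / ((2*((i:ℝ)+1)+1) * ((Nat.choose (2*(i+1)) (i+1)) : ℝ))) = Real.pi^3 / 48 := by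
  have hterm : ∀ i : ℕ, (2 : ℝ) ^ (i + 1) * (∑ j ∈ range (i + 1), (1 : ℝ) / ((j : ℝ) + 1) ^ 2) /
      ((2 * ((i : ℝ) + 1) + 1) * ((2 * (i + 1)).choose (i + 1) : ℝ)) =
        arcsinCoeff (i + 1) * sumInvSq (i + 1) / 2 ^ (i + 1) := fun i => by
    rw [arcsinCoeff_mul_div_two_pow]
    push_cast
    rfl
  rw [tsum_congr hterm]
  simpa [sumInvSq] using
    ((hasSum_nat_add_iff' 1).2 hasSum_arcsinCoeff_mul_sumInvSq_div_two_pow).tsum_eq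
end

section
/- The infinite sum over i ≥ 1 of 3^i · ((∑_{j=1}^i 1/j²) − 1/i²)/(i² · binom(2i, i)) equals 2π⁴/243. -/
/-!
With `x = sin θ` the operator `(1 - x²) d²/dx² - x d/dx` becomes `d²/dθ²`. Hence an even power
series `∑ cₙ x^(2n)` with `c₀ = 0` equals `arcsin x ^ (p + 2)` on `(-1, 1)` as soon as
`(1 - x²) f'' - x f'`, whose coefficients are `(2n + 2)(2n + 1) cₙ₊₁ - (2n)² cₙ`, equals
`(p + 2)(p + 1) arcsin x ^ p`. For `cₙ = 4ⁿ / (2 n² C(2n, n))` this is the constant `2`, giving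
`arcsin²`; for `3 H⁽²⁾ₙ₋₁ cₙ` it is `12 cₙ`, giving `arcsin⁴`. At `x = √3 / 2` we have
`arcsin x = π / 3` and `x² = 3 / 4`, and the sum is `(2 / 3) (π / 3)⁴`.
-/

open Real Finset

namespace ArcsinPowSeries

section EvenPowerSeries

def evenPowTerm (c : ℕ → ℝ) (k n : ℕ) (x : ℝ) : ℝ :=
  c n * (2 * n).descFactorial k * x ^ (2 * n - k)

lemma hasDerivAt_evenPowTerm (c : ℕ → ℝ) (k n : ℕ) (x : ℝ) :
    HasDerivAt (evenPowTerm c k n) (evenPowTerm c (k + 1) n x) x := by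
  refine ((hasDerivAt_pow (2 * n - k) x).const_mul (c n * (2 * n).descFactorial k)).congr_deriv ?_
  simp only [evenPowTerm, Nat.descFactorial_succ, Nat.sub_sub, Nat.cast_mul]
  ring

lemma summable_descFactorial_mul_pow_sub (k : ℕ) {r : ℝ} (hr₀ : 0 ≤ r) (hr : r < 1) :
    Summable fun m : ℕ => (m.descFactorial k : ℝ) * r ^ (m - k) := by
  rw [← summable_nat_add_iff k]
  simpa using summable_descFactorial_mul_geometric_of_norm_lt_one k
    (by rwa [norm_of_nonneg hr₀] : ‖r‖ < 1)

variable {c : ℕ → ℝ} {C : ℝ}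

lemma norm_evenPowTerm_le (hc : ∀ n, |c n| ≤ C) (k n : ℕ) {x r : ℝ} (hx : |x| ≤ r) :
    ‖evenPowTerm c k n x‖ ≤ C * ((2 * n).descFactorial k * r ^ (2 * n - k)) := by
  have hC : 0 ≤ C := (abs_nonneg _).trans (hc 0)
  rw [Real.norm_eq_abs, evenPowTerm, abs_mul, abs_mul, abs_pow, Nat.abs_cast, ← mul_assoc]
  gcongr
  exact hc n

lemma summable_evenPowTerm_bound (C : ℝ) (k : ℕ) {r : ℝ} (hr₀ : 0 ≤ r) (hr : r < 1) :
    Summable fun n : ℕ => C * ((2 * n).descFactorial k * r ^ (2 * n - k)) :=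
  ((summable_descFactorial_mul_pow_sub k hr₀ hr).comp_injective
    (mul_right_injective₀ two_ne_zero)).mul_left C

lemma summable_evenPowTerm (hc : ∀ n, |c n| ≤ C) (k : ℕ) {x : ℝ} (hx : |x| < 1) :
    Summable fun n => evenPowTerm c k n x :=
  .of_norm_bounded (summable_evenPowTerm_bound C k (abs_nonneg x) hx)
    fun n => norm_evenPowTerm_le hc k n le_rfl

lemma hasDerivAt_tsum_evenPowTerm (hc : ∀ n, |c n| ≤ C) (k : ℕ) {x : ℝ} (hx : |x| < 1) :
    HasDerivAt (fun y => ∑' n, evenPowTerm c k n y) (∑' n, evenPowTerm c (k + 1) n x) x := by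
  obtain ⟨r, hxr, hr⟩ := exists_between hx
  have hr₀ : 0 < r := (abs_nonneg x).trans_lt hxr
  exact hasDerivAt_tsum_of_isPreconnected (summable_evenPowTerm_bound C (k + 1) hr₀.le hr)
    isOpen_Ioo isPreconnected_Ioo (fun n y _ => hasDerivAt_evenPowTerm c k n y)
    (fun n y hy => norm_evenPowTerm_le hc (k + 1) n (abs_lt.2 hy).le)
    (by simpa using hr₀ : (0 : ℝ) ∈ Set.Ioo (-r) r)
    (summable_evenPowTerm hc k (by simp)) (abs_lt.1 hxr)

lemma tsum_evenPowTerm_zero_zero (c : ℕ → ℝ) : ∑' n, evenPowTerm c 0 n 0 = c 0 := by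
  rw [tsum_eq_single 0 fun n hn => by simp [evenPowTerm, hn]]
  simp [evenPowTerm]

lemma tsum_evenPowTerm_one_zero (c : ℕ → ℝ) : ∑' n, evenPowTerm c 1 n 0 = 0 := by
  refine (tsum_congr fun n => ?_).trans tsum_zero
  rcases n with _ | n <;> simp [evenPowTerm, Nat.mul_succ]

lemma evenPowTerm_ode (c : ℕ → ℝ) (n : ℕ) (x : ℝ) :
    evenPowTerm c 2 (n + 1) x - (x ^ 2 * evenPowTerm c 2 n x + x * evenPowTerm c 1 n x) =
      ((2 * n + 2) * (2 * n + 1) * c (n + 1) - (2 * n) ^ 2 * c n) * x ^ (2 * n) := by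
  have hd₂ (m : ℕ) : ((2 * (m + 1)).descFactorial 2 : ℝ) = (2 * m + 2) * (2 * m + 1) := by
    simp [Nat.descFactorial_succ, show 2 * (m + 1) - 1 = 2 * m + 1 by omega]; ring
  have hd₁ (m : ℕ) : ((2 * m).descFactorial 1 : ℝ) = 2 * m := by simp
  rcases n with _ | n
  · simp [evenPowTerm, mul_comm]
  · simp only [evenPowTerm, hd₂, hd₁, show 2 * (n + 1 + 1) - 2 = 2 * (n + 1) by omega,
      show 2 * (n + 1) - 2 = 2 * n by omega, show 2 * (n + 1) - 1 = 2 * n + 1 by omega]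
    push_cast
    ring

lemma tsum_evenPowTerm_ode (hc : ∀ n, |c n| ≤ C) {x : ℝ} (hx : |x| < 1) :
    (1 - x ^ 2) * ∑' n, evenPowTerm c 2 n x - x * ∑' n, evenPowTerm c 1 n x =
      ∑' n : ℕ, ((2 * n + 2) * (2 * n + 1) * c (n + 1) - (2 * n) ^ 2 * c n) * x ^ (2 * n) := by
  have h₁ := summable_evenPowTerm hc 1 hx
  have h₂ := summable_evenPowTerm hc 2 hx
  have h₂' : Summable fun n => evenPowTerm c 2 (n + 1) x := (summable_nat_add_iff 1).2 h₂
  calc (1 - x ^ 2) * ∑' n, evenPowTerm c 2 n x - x * ∑' n, evenPowTerm c 1 n x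
      = ∑' n, evenPowTerm c 2 (n + 1) x -
          (∑' n, x ^ 2 * evenPowTerm c 2 n x + ∑' n, x * evenPowTerm c 1 n x) := by
        rw [tsum_mul_left, tsum_mul_left, h₂.tsum_eq_zero_add]
        simp [evenPowTerm]
        ring
    _ = _ := by
        rw [← (h₂.mul_left _).tsum_add (h₁.mul_left _),
          ← h₂'.tsum_sub ((h₂.mul_left _).add (h₁.mul_left _))]
        exact tsum_congr (evenPowTerm_ode c · x)

end EvenPowerSeries

section ArcsinODE

lemma eqOn_Ioo_of_hasDerivAt {f g f' : ℝ → ℝ}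
    (hf : ∀ x ∈ Set.Ioo (-1 : ℝ) 1, HasDerivAt f (f' x) x)
    (hg : ∀ x ∈ Set.Ioo (-1 : ℝ) 1, HasDerivAt g (f' x) x) (h₀ : f 0 = g 0) :
    Set.EqOn f g (Set.Ioo (-1) 1) :=
  isOpen_Ioo.eqOn_of_deriv_eq isPreconnected_Ioo
    (fun x hx => (hf x hx).differentiableAt.differentiableWithinAt)
    (fun x hx => (hg x hx).differentiableAt.differentiableWithinAt)
    (fun x hx => (hf x hx).deriv.trans (hg x hx).deriv.symm) (by norm_num) h₀

variable {x : ℝ}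

lemma one_sub_sq_pos_of_mem_Ioo (hx : x ∈ Set.Ioo (-1 : ℝ) 1) : 0 < 1 - x ^ 2 := by
  nlinarith [hx.1, hx.2]

lemma hasDerivAt_arcsin_of_mem_Ioo (hx : x ∈ Set.Ioo (-1 : ℝ) 1) :
    HasDerivAt arcsin (1 / √(1 - x ^ 2)) x :=
  hasDerivAt_arcsin hx.1.ne' hx.2.ne

lemma hasDerivAt_sqrt_one_sub_sq (hx : x ∈ Set.Ioo (-1 : ℝ) 1) :
    HasDerivAt (fun y => √(1 - y ^ 2)) (-x / √(1 - x ^ 2)) x := by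
  have hx' := one_sub_sq_pos_of_mem_Ioo hx
  refine (((hasDerivAt_pow 2 x).const_sub 1).sqrt hx'.ne').congr_deriv ?_
  field_simp
  ring

theorem eqOn_arcsin_pow_of_ode {f f' f'' : ℝ → ℝ} (p : ℕ)
    (hf : ∀ x ∈ Set.Ioo (-1 : ℝ) 1, HasDerivAt f (f' x) x)
    (hf' : ∀ x ∈ Set.Ioo (-1 : ℝ) 1, HasDerivAt f' (f'' x) x)
    (hode : ∀ x ∈ Set.Ioo (-1 : ℝ) 1,
      (1 - x ^ 2) * f'' x - x * f' x = (p + 2) * (p + 1) * arcsin x ^ p)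
    (h₀ : f 0 = 0) (h₀' : f' 0 = 0) :
    Set.EqOn f (fun x => arcsin x ^ (p + 2)) (Set.Ioo (-1) 1) := by
  -- `√(1 - x ^ 2) * f' x` is `F'(θ)` for `F(θ) = f (sin θ)`, and `F'' = (p + 2) (p + 1) θ ^ p`.
  have hf'_eq : Set.EqOn (fun x => √(1 - x ^ 2) * f' x) (fun x => (p + 2) * arcsin x ^ (p + 1))
      (Set.Ioo (-1) 1) := by
    refine eqOn_Ioo_of_hasDerivAt
      (f' := fun x => (p + 2) * ((p + 1) * arcsin x ^ p * (1 / √(1 - x ^ 2))))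
      (fun x hx => ?_) (fun x hx => ?_) (by simp [h₀'])
    · have hs := Real.sqrt_pos.2 (one_sub_sq_pos_of_mem_Ioo hx)
      refine ((hasDerivAt_sqrt_one_sub_sq hx).mul (hf' x hx)).congr_deriv ?_
      field_simp
      rw [Real.sq_sqrt (one_sub_sq_pos_of_mem_Ioo hx).le]
      linear_combination hode x hx
    · simpa using ((hasDerivAt_arcsin_of_mem_Ioo hx).fun_pow (p + 1)).const_mul ((p : ℝ) + 2)
  refine eqOn_Ioo_of_hasDerivAt (f' := fun x => (p + 2) * arcsin x ^ (p + 1) * (1 / √(1 - x ^ 2)))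
    (fun x hx => ?_) (fun x hx => ?_) (by simp [h₀])
  · refine (hf x hx).congr_deriv ?_
    have hs := Real.sqrt_pos.2 (one_sub_sq_pos_of_mem_Ioo hx)
    have h := hf'_eq hx
    field_simp
    linear_combination h
  · simpa using (hasDerivAt_arcsin_of_mem_Ioo hx).fun_pow (p + 2)

end ArcsinODE

section Coefficients

noncomputable def harmonicSq (n : ℕ) : ℝ := ∑ j ∈ range n, 1 / ((j : ℝ) + 1) ^ 2

-- At `n = 0` the division by zero gives `0`, the constant coefficient of `arcsin x ^ 2`.
noncomputable def arcsinSqCoeff (n : ℕ) : ℝ := 4 ^ n / (2 * n ^ 2 * n.centralBinom)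

noncomputable def arcsinPowFourCoeff (n : ℕ) : ℝ := 3 * harmonicSq (n - 1) * arcsinSqCoeff n

lemma harmonicSq_succ (n : ℕ) : harmonicSq (n + 1) = harmonicSq n + 1 / ((n : ℝ) + 1) ^ 2 :=
  sum_range_succ _ _

lemma harmonicSq_nonneg (n : ℕ) : 0 ≤ harmonicSq n :=
  sum_nonneg fun _ _ => by positivity

/-- Telescoping against `1 / (j + 1) ^ 2 ≤ 2 / (j + 1) - 2 / (j + 2)`. -/
lemma harmonicSq_le (n : ℕ) : harmonicSq n ≤ 2 - 2 / ((n : ℝ) + 1) := by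
  induction n with
  | zero => simp [harmonicSq]
  | succ n ih =>
    have step : 1 / ((n : ℝ) + 1) ^ 2 ≤ 2 / ((n : ℝ) + 1) - 2 / ((n : ℝ) + 1 + 1) := by
      rw [div_sub_div _ _ (by positivity) (by positivity),
        div_le_div_iff₀ (by positivity) (by positivity)]
      nlinarith
    rw [harmonicSq_succ]
    push_cast
    linarith

lemma harmonicSq_le_two (n : ℕ) : harmonicSq n ≤ 2 :=
  (harmonicSq_le n).trans (by linarith [show 0 < 2 / ((n : ℝ) + 1) by positivity])

lemma arcsinSqCoeff_zero : arcsinSqCoeff 0 = 0 := by simp [arcsinSqCoeff]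

lemma arcsinPowFourCoeff_zero : arcsinPowFourCoeff 0 = 0 := by
  simp [arcsinPowFourCoeff, arcsinSqCoeff_zero]

lemma arcsinSqCoeff_nonneg (n : ℕ) : 0 ≤ arcsinSqCoeff n := by
  unfold arcsinSqCoeff; positivity

lemma arcsinSqCoeff_le_one (n : ℕ) : arcsinSqCoeff n ≤ 1 := by
  rcases Nat.eq_zero_or_pos n with rfl | hn
  · simp [arcsinSqCoeff_zero]
  have h₄ : (4 : ℝ) ^ n ≤ 2 * n * n.centralBinom := by
    exact_mod_cast Nat.four_pow_le_two_mul_self_mul_centralBinom n hn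
  have hn' : (1 : ℝ) ≤ n := by exact_mod_cast hn
  have hc : (0 : ℝ) < n.centralBinom := by exact_mod_cast n.centralBinom_pos
  rw [arcsinSqCoeff, div_le_one (by positivity)]
  nlinarith [mul_le_mul_of_nonneg_left hn' (by positivity : (0 : ℝ) ≤ 2 * n * n.centralBinom)]

lemma abs_arcsinSqCoeff_le (n : ℕ) : |arcsinSqCoeff n| ≤ 1 := by
  rw [abs_of_nonneg (arcsinSqCoeff_nonneg n)]
  exact arcsinSqCoeff_le_one n

lemma abs_arcsinPowFourCoeff_le (n : ℕ) : |arcsinPowFourCoeff n| ≤ 6 := by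
  have hH := harmonicSq_nonneg (n - 1)
  rw [arcsinPowFourCoeff, abs_of_nonneg (by have := arcsinSqCoeff_nonneg n; positivity)]
  nlinarith [harmonicSq_le_two (n - 1), arcsinSqCoeff_le_one n, arcsinSqCoeff_nonneg n]

lemma arcsinSqCoeff_recurrence (n : ℕ) :
    (2 * n + 2) * (2 * n + 1) * arcsinSqCoeff (n + 1) - (2 * n) ^ 2 * arcsinSqCoeff n =
      if n = 0 then 2 else 0 := by
  rcases n with _ | n
  · norm_num [arcsinSqCoeff, Nat.centralBinom, Nat.choose]
  have h := Nat.succ_mul_centralBinom_succ (n + 1)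
  have hc' : ((n + 2).centralBinom : ℝ) = 2 * (2 * n + 3) * (n + 1).centralBinom / (n + 2) := by
    rw [eq_div_iff (by positivity)]
    exact_mod_cast (by rw [mul_comm] at h; simpa [two_mul, add_assoc, mul_add] using h)
  simp only [arcsinSqCoeff, if_neg n.succ_ne_zero, hc']
  push_cast
  field_simp
  ring

lemma arcsinPowFourCoeff_recurrence (n : ℕ) :
    (2 * n + 2) * (2 * n + 1) * arcsinPowFourCoeff (n + 1) - (2 * n) ^ 2 * arcsinPowFourCoeff n =
      12 * arcsinSqCoeff n := by
  have h := arcsinSqCoeff_recurrence n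
  rcases n with _ | n
  · simp [arcsinPowFourCoeff, arcsinSqCoeff_zero, harmonicSq]
  simp only [if_neg n.succ_ne_zero] at h
  simp only [arcsinPowFourCoeff, Nat.add_sub_cancel, harmonicSq_succ]
  push_cast at h ⊢
  linear_combination (norm := skip) (3 * harmonicSq n + 3 / ((n : ℝ) + 1) ^ 2) * h
  field_simp
  ring

end Coefficients

section Series

variable {x : ℝ}

theorem hasSum_arcsin_pow_of_recurrence {c : ℕ → ℝ} {C : ℝ} (hc : ∀ n, |c n| ≤ C)
    (hc₀ : c 0 = 0) (p : ℕ) (hrec : ∀ y ∈ Set.Ioo (-1 : ℝ) 1,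
      ∑' n : ℕ, ((2 * n + 2) * (2 * n + 1) * c (n + 1) - (2 * n) ^ 2 * c n) * y ^ (2 * n) =
        (p + 2) * (p + 1) * arcsin y ^ p)
    (hx : x ∈ Set.Ioo (-1 : ℝ) 1) :
    HasSum (fun n => c n * x ^ (2 * n)) (arcsin x ^ (p + 2)) := by
  have hode := eqOn_arcsin_pow_of_ode p (f := fun y => ∑' n, evenPowTerm c 0 n y)
    (fun y hy => hasDerivAt_tsum_evenPowTerm hc 0 (abs_lt.2 hy))
    (fun y hy => hasDerivAt_tsum_evenPowTerm hc 1 (abs_lt.2 hy))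
    (fun y hy => (tsum_evenPowTerm_ode hc (abs_lt.2 hy)).trans (hrec y hy))
    ((tsum_evenPowTerm_zero_zero c).trans hc₀) (tsum_evenPowTerm_one_zero c)
  have h := (summable_evenPowTerm hc 0 (abs_lt.2 hx)).hasSum
  rw [show ∑' n, evenPowTerm c 0 n x = arcsin x ^ (p + 2) from hode hx] at h
  simpa [evenPowTerm] using h

theorem hasSum_arcsin_sq (hx : x ∈ Set.Ioo (-1 : ℝ) 1) :
    HasSum (fun n => arcsinSqCoeff n * x ^ (2 * n)) (arcsin x ^ 2) := by
  refine hasSum_arcsin_pow_of_recurrence abs_arcsinSqCoeff_le arcsinSqCoeff_zero 0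
    (fun y _ => ?_) hx
  simp_rw [arcsinSqCoeff_recurrence]
  rw [tsum_eq_single 0 fun n hn => by simp [hn]]
  norm_num

theorem hasSum_arcsin_pow_four (hx : x ∈ Set.Ioo (-1 : ℝ) 1) :
    HasSum (fun n => arcsinPowFourCoeff n * x ^ (2 * n)) (arcsin x ^ 4) := by
  refine hasSum_arcsin_pow_of_recurrence abs_arcsinPowFourCoeff_le
    arcsinPowFourCoeff_zero 2 (fun y hy => ?_) hx
  simp_rw [arcsinPowFourCoeff_recurrence, mul_assoc, tsum_mul_left, (hasSum_arcsin_sq hy).tsum_eq]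
  ring

end Series

lemma arcsin_sqrt_three_div_two : arcsin (√3 / 2) = π / 3 := by
  rw [← sin_pi_div_three, arcsin_sin (by linarith [pi_pos]) (by linarith [pi_pos])]

lemma sqrt_three_div_two_mem_Ioo : √3 / 2 ∈ Set.Ioo (-1 : ℝ) 1 := by
  have h : √3 < 2 := by
    rw [Real.sqrt_lt' two_pos]; norm_num
  constructor <;> linarith [Real.sqrt_nonneg 3]

lemma summand_eq_arcsinPowFour_term (i : ℕ) :
    (3 : ℝ) ^ (i + 1) *
        ((∑ j ∈ range (i + 1), (1 : ℝ) / ((j : ℝ) + 1) ^ 2) - 1 / ((i : ℝ) + 1) ^ 2) /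
        (((i : ℝ) + 1) ^ 2 * ((2 * (i + 1)).choose (i + 1) : ℝ)) =
      2 / 3 * (arcsinPowFourCoeff (i + 1) * (√3 / 2) ^ (2 * (i + 1))) := by
  have hH : (∑ j ∈ range (i + 1), (1 : ℝ) / ((j : ℝ) + 1) ^ 2) - 1 / ((i : ℝ) + 1) ^ 2 =
      harmonicSq i := by
    rw [← harmonicSq, harmonicSq_succ]; ring
  have hx : (√3 / 2 : ℝ) ^ (2 * (i + 1)) = (3 / 4) ^ (i + 1) := by
    rw [pow_mul, div_pow, Real.sq_sqrt (by norm_num)]; norm_num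
  rw [hH, hx, ← Nat.centralBinom_eq_two_mul_choose, arcsinPowFourCoeff, arcsinSqCoeff,
    Nat.add_sub_cancel, div_pow]
  push_cast
  field_simp

end ArcsinPowSeries

theorem stmt_17 : (∑' i : ℕ, (3:ℝ)^(i+1) * ((∑ j ∈ Finset.range (i+1), (1:ℝ)/((j:ℝ)+1)^2) - 1/((i:ℝ)+1)^2) / (((i:ℝ)+1)^2 * ((Nat.choose (2*(i+1)) (i+1)) : ℝ))) = 2 * Real.pi^4 / 243 := by
  have h := ArcsinPowSeries.hasSum_arcsin_pow_four ArcsinPowSeries.sqrt_three_div_two_mem_Ioo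
  rw [ArcsinPowSeries.arcsin_sqrt_three_div_two, ← hasSum_nat_add_iff' 1] at h
  simp only [range_one, sum_singleton, ArcsinPowSeries.arcsinPowFourCoeff_zero, zero_mul,
    sub_zero] at h
  rw [tsum_congr ArcsinPowSeries.summand_eq_arcsinPowFour_term, (h.mul_left (2 / 3)).tsum_eq]
  ring
end
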